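/- arXiv:2407.05403 — 11 statements merged into one kernel-verified Lean document; each statement's English description precedes it below -/
import Mathlib

section
/- Let A be a C*-algebra and let T : A → A be a bijective bounded linear operator. If both T and its inverse T⁻¹ are contractive (operator norm at most 1) and positive, then T is a Jordan automorphism; in particular, T(a)² = T(a²) for every self-adjoint a ∈ A, and consequently T((xy+yx)/2) = (T(x)T(y)+T(y)T(x))/2 for all self-adjoint x, y ∈ A. -/
private lemma hat_eq (u : ℝ) (j : ℤ) :
    max 0 (1 - |u - (j : ℝ)|) =
      (if j = ⌊u⌋ then 1 - Int.fract u else 0) +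
      (if j = ⌊u⌋ + 1 then Int.fract u else 0) := by
  have hfr := Int.fract_nonneg u
  have hfr1 := Int.fract_lt_one u
  have huf : u - (⌊u⌋ : ℝ) = Int.fract u := Int.self_sub_floor u
  rcases eq_or_ne j ⌊u⌋ with rfl | h1
  · rw [if_pos rfl, if_neg (by omega), huf, abs_of_nonneg hfr,
      max_eq_right (by linarith), add_zero]
  rcases eq_or_ne j (⌊u⌋ + 1) with rfl | h2
  · rw [if_neg h1, if_pos rfl, zero_add]
    have h3 : u - ((⌊u⌋ + 1 : ℤ) : ℝ) = Int.fract u - 1 := by push_cast; linarith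
    rw [h3, abs_of_nonpos (by linarith), max_eq_right (by linarith)]
    ring
  · rw [if_neg h1, if_neg h2, add_zero]
    have hfl := Int.floor_le u
    have hfu := Int.lt_floor_add_one u
    have habs : 1 ≤ |u - (j : ℝ)| := by
      rcases lt_or_gt_of_ne h1 with h | h
      · have : (j : ℝ) ≤ (⌊u⌋ : ℝ) - 1 := by exact_mod_cast Int.le_sub_one_of_lt h
        rw [abs_of_nonneg (by linarith)]; linarith
      · have : (⌊u⌋ : ℝ) + 2 ≤ (j : ℝ) := by exact_mod_cast by omega
        rw [abs_of_nonpos (by linarith)]; linarith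
    exact max_eq_left (by linarith)

private lemma hat_sum (u : ℝ) (s : Finset ℤ) :
    ∑ j ∈ s, max 0 (1 - |u - (j : ℝ)|) =
      (if ⌊u⌋ ∈ s then 1 - Int.fract u else 0) +
      (if ⌊u⌋ + 1 ∈ s then Int.fract u else 0) := by
  rw [Finset.sum_congr rfl (fun j _ => hat_eq u j), Finset.sum_add_distrib,
    Finset.sum_ite_eq' s ⌊u⌋ (fun _ => 1 - Int.fract u),
    Finset.sum_ite_eq' s (⌊u⌋ + 1) (fun _ => Int.fract u)]

private lemma hat_sum_le_one (u : ℝ) (s : Finset ℤ) :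
    ∑ j ∈ s, max 0 (1 - |u - (j : ℝ)|) ≤ 1 := by
  rw [hat_sum]
  have h1 := Int.fract_nonneg u
  have h2 := (Int.fract_lt_one u).le
  split_ifs <;> linarith

private lemma hat_sum_eq_one {m : ℤ} {u : ℝ} (h1 : -(m : ℝ) ≤ u) (h2 : u ≤ m) :
    ∑ j ∈ Finset.Icc (-m) m, max 0 (1 - |u - (j : ℝ)|) = 1 := by
  rw [hat_sum]
  have hfl : ⌊u⌋ ∈ Finset.Icc (-m) m := by
    rw [Finset.mem_Icc]
    refine ⟨Int.le_floor.mpr (by exact_mod_cast h1), ?_⟩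
    have := Int.floor_le_floor h2
    simpa using this
  rw [if_pos hfl]
  by_cases hm : ⌊u⌋ + 1 ∈ Finset.Icc (-m) m
  · rw [if_pos hm]; ring
  · rw [if_neg hm]
    have hfm : ⌊u⌋ = m := by rw [Finset.mem_Icc] at hfl hm; omega
    have hu : u = (m : ℝ) := le_antisymm h2 (by rw [← hfm]; exact Int.floor_le u)
    rw [hu, Int.fract_intCast]
    ring

section CStar

variable {A : Type*} [NonUnitalCStarAlgebra A] [PartialOrder A] [StarOrderedRing A]

private lemma isSelfAdjoint_sum' {ι : Type*} (s : Finset ι) (f : ι → A)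
    (h : ∀ j ∈ s, IsSelfAdjoint (f j)) : IsSelfAdjoint (∑ j ∈ s, f j) := by
  unfold IsSelfAdjoint
  rw [star_sum]
  exact Finset.sum_congr rfl h

private lemma jensen_finite {ι : Type*} (s : Finset ι) (lam : ι → ℝ) (x : ι → A)
    (hx : ∀ j ∈ s, 0 ≤ x j) (hs : ‖∑ j ∈ s, x j‖ ≤ 1) :
    (∑ j ∈ s, lam j • x j) * (∑ j ∈ s, lam j • x j) ≤ ∑ j ∈ s, (lam j)^2 • x j := by
  set b : A := ∑ j ∈ s, lam j • x j with hbdef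
  set σ : A := ∑ j ∈ s, x j with hσdef
  have hσnn : 0 ≤ σ := Finset.sum_nonneg hx
  have hσsa : IsSelfAdjoint σ := .of_nonneg hσnn
  have hbsa : IsSelfAdjoint b := isSelfAdjoint_sum' s _ fun j hj =>
    (show IsSelfAdjoint (lam j) from star_trivial _).smul (.of_nonneg (hx j hj))
  have hterm : ∀ j ∈ s, (0 : A) ≤
      (lam j)^2 • x j - lam j • (b * x j) - lam j • (x j * b) + b * x j * b := by
    intro j hj
    set c : A := CFC.sqrt (x j) with hcdef
    have hcc : c * c = x j := CFC.sqrt_mul_sqrt_self (x j) (hx j hj)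
    have hcsa : IsSelfAdjoint c := .of_nonneg (CFC.sqrt_nonneg _)
    have hd : (lam j)^2 • x j - lam j • (b * x j) - lam j • (x j * b) + b * x j * b
        = star (lam j • c - c * b) * (lam j • c - c * b) := by
      rw [star_sub, star_smul, star_mul, hcsa.star_eq, hbsa.star_eq, star_trivial, ← hcc]
      simp only [sub_mul, mul_sub, smul_mul_assoc, mul_smul_comm, smul_smul, mul_assoc, sq,
        smul_sub, smul_add]
      abel
    rw [hd]
    exact star_mul_self_nonneg _
  have hsum : (0 : A) ≤ (∑ j ∈ s, (lam j)^2 • x j) - b * b - b * b + b * σ * b := by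
    calc (0:A) ≤ ∑ j ∈ s, ((lam j)^2 • x j - lam j • (b * x j) - lam j • (x j * b) + b * x j * b) :=
          Finset.sum_nonneg hterm
      _ = (∑ j ∈ s, (lam j)^2 • x j) - b * b - b * b + b * σ * b := by
          have e1 : ∑ j ∈ s, lam j • (b * x j) = b * b := by
            simp_rw [← mul_smul_comm, ← Finset.mul_sum]; rfl
          have e2 : ∑ j ∈ s, lam j • (x j * b) = b * b := by
            simp_rw [← smul_mul_assoc, ← Finset.sum_mul]; rfl
          have e3 : ∑ j ∈ s, b * x j * b = b * σ * b := by
            simp_rw [← Finset.sum_mul, ← Finset.mul_sum]; rfl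
          rw [Finset.sum_add_distrib, Finset.sum_sub_distrib, Finset.sum_sub_distrib, e1, e2, e3]
  have hconj : b * σ * b ≤ ‖σ‖ • (b * b) := by
    have := CStarAlgebra.star_left_conjugate_le_norm_smul (a := b) (b := σ) hσsa
    simpa [hbsa.star_eq] using this
  have hbb : (0 : A) ≤ b * b := by
    have := star_mul_self_nonneg b
    rwa [hbsa.star_eq] at this
  have hsm : ‖σ‖ • (b * b) ≤ b * b := by
    have h3 : (0 : A) ≤ (1 - ‖σ‖) • (b * b) := smul_nonneg (by linarith) hbb
    rw [sub_smul, one_smul] at h3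
    exact sub_nonneg.mp h3
  have h4 : b * b + b * b ≤ (∑ j ∈ s, (lam j)^2 • x j) + b * σ * b := by
    have h5 : (0:A) ≤ ((∑ j ∈ s, (lam j)^2 • x j) + b * σ * b) - (b * b + b * b) := by
      calc (0:A) ≤ (∑ j ∈ s, (lam j)^2 • x j) - b * b - b * b + b * σ * b := hsum
        _ = ((∑ j ∈ s, (lam j)^2 • x j) + b * σ * b) - (b * b + b * b) := by abel
    exact sub_nonneg.mp h5
  have h5 : b * b + b * b ≤ (∑ j ∈ s, (lam j)^2 • x j) + b * b :=
    h4.trans (add_le_add le_rfl (hconj.trans hsm))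
  exact le_of_add_le_add_right h5

open Filter in
private lemma schwarz_ineq (T : A →L[ℂ] A) (hTnorm : ‖T‖ ≤ 1)
    (hTpos : ∀ a : A, 0 ≤ a → 0 ≤ T a) {a : A} (ha : IsSelfAdjoint a) :
    T a * T a ≤ T (a * a) := by
  rcases eq_or_ne a 0 with rfl | ha0
  · simp
  have hR : (0:ℝ) < ‖a‖ := norm_pos_iff.mpr ha0
  have hTcontr : ∀ x : A, ‖T x‖ ≤ ‖x‖ := fun x =>
    (T.le_opNorm x).trans (by nlinarith [norm_nonneg x])
  have hspec : ∀ t ∈ quasispectrum ℝ a, |t| ≤ ‖a‖ := fun t ht => by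
    rw [Unitization.quasispectrum_eq_spectrum_inr' ℝ ℂ a] at ht
    simpa [Unitization.norm_inr] using spectrum.norm_le_norm_of_mem ht
  have main : ∀ n : ℕ, ∃ b c : A, (T b * T b ≤ T c) ∧ ‖a - b‖ ≤ ‖a‖/(n+1) ∧
      ‖a * a - c‖ ≤ 3*‖a‖*(‖a‖/(n+1)) := by
    intro n
    set R : ℝ := ‖a‖ with hRdef
    set δ : ℝ := R / (n+1) with hδdef
    have hδpos : 0 < δ := by positivity
    have hδR : δ ≤ R := by
      rw [hδdef]
      apply div_le_self hR.le
      have : (0:ℝ) ≤ (n:ℝ) := Nat.cast_nonneg n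
      linarith
    set m : ℤ := (n : ℤ) + 1 with hmdef
    have hmδ : (m : ℝ) * δ = R := by
      rw [hδdef, hmdef]
      push_cast
      field_simp
    set f : ℤ → ℝ → ℝ := fun j t => max 0 (1 - |t/δ - j|) with hfdef
    have hfc : ∀ j, Continuous (f j) := by
      intro j
      apply Continuous.max continuous_const
      fun_prop
    have hfnn : ∀ j t, 0 ≤ f j t := fun j t => le_max_left _ _
    set s : Finset ℤ := (Finset.Icc (-m) m).erase 0 with hsdef
    have hf0 : ∀ j ∈ s, f j 0 = 0 := by
      intro j hj
      have hj0 : j ≠ 0 := (Finset.mem_erase.mp hj).1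
      have h1 : (1:ℝ) ≤ |(0:ℝ)/δ - j| := by
        rw [zero_div, zero_sub, abs_neg]
        have h2 : (1:ℤ) ≤ |j| := Int.one_le_abs hj0
        calc (1:ℝ) = ((1:ℤ):ℝ) := by norm_num
          _ ≤ ((|j| : ℤ):ℝ) := by exact_mod_cast h2
          _ = |(j:ℝ)| := by push_cast; ring
      exact max_eq_left (by linarith)
    have hsupp : ∀ j t, f j t ≠ 0 → |t - j*δ| ≤ δ := by
      intro j t hne
      by_contra hgt
      push_neg at hgt
      have h1 : (1:ℝ) < |t/δ - j| := by
        rw [show t/δ - (j:ℝ) = (t - j*δ)/δ by field_simp, abs_div, abs_of_pos hδpos,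
          lt_div_iff₀ hδpos]
        linarith
      exact hne (max_eq_left (by linarith))
    have hpart : ∀ t : ℝ, |t| ≤ R → ∑ j ∈ Finset.Icc (-m) m, f j t = 1 := by
      intro t ht
      have habs : |t/δ| ≤ (m:ℝ) := by
        rw [abs_div, abs_of_pos hδpos, div_le_iff₀ hδpos, hmδ]
        exact ht
      exact hat_sum_eq_one (abs_le.mp habs).1 (abs_le.mp habs).2
    have hple : ∀ t : ℝ, ∑ j ∈ s, f j t ≤ 1 := fun t => hat_sum_le_one (t/δ) s
    set y : ℤ → A := fun j => cfcₙ (f j) a with hydef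
    have hycont : ∀ j, ContinuousOn (f j) (quasispectrum ℝ a) := fun j => (hfc j).continuousOn
    have hynn : ∀ j, j ∈ s → 0 ≤ y j := fun j _ => cfcₙ_nonneg (fun t _ => hfnn j t)
    have hsplit : ∀ (c : ℤ → ℝ),
        cfcₙ (fun t => ∑ j ∈ s, c j * f j t) a = ∑ j ∈ s, (c j) • y j := by
      intro c
      have h1 := cfcₙ_sum (R := ℝ) (fun j t => c j * f j t) a s
        (fun j _ => (continuous_const.mul (hfc j)).continuousOn)
        (fun j hj => by simp only [hf0 j hj, mul_zero])
      calc cfcₙ (fun t => ∑ j ∈ s, c j * f j t) a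
          = cfcₙ (∑ j ∈ s, fun t => c j * f j t) a := by
            congr 1
            ext t
            simp
        _ = ∑ j ∈ s, cfcₙ (fun t => c j * f j t) a := h1
        _ = ∑ j ∈ s, (c j) • y j := Finset.sum_congr rfl fun j hj =>
            cfcₙ_const_mul (c j) (f j) a (hycont j) (hf0 j hj)
    have hsum_cont : ∀ (c : ℤ → ℝ), ContinuousOn (fun t => ∑ j ∈ s, c j * f j t)
        (quasispectrum ℝ a) := fun c =>
      (continuous_finset_sum s fun j _ => continuous_const.mul (hfc j)).continuousOn
    have hsum_zero : ∀ (c : ℤ → ℝ), (fun t => ∑ j ∈ s, c j * f j t) 0 = 0 := fun c => by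
      simp only
      exact Finset.sum_eq_zero fun j hj => by rw [hf0 j hj, mul_zero]
    have hpoint : ∀ (c : ℤ → ℝ) (g : ℝ → ℝ) (K : ℝ), c 0 = 0 →
        (∀ j t, |t| ≤ R → f j t ≠ 0 → |g t - c j| ≤ K) →
        ∀ t, |t| ≤ R → |g t - ∑ j ∈ s, c j * f j t| ≤ K := by
      intro c g K hc0 hcj t ht
      have herase : ∑ j ∈ s, c j * f j t = ∑ j ∈ Finset.Icc (-m) m, c j * f j t := by
        rw [hsdef]
        exact Finset.sum_erase _ (by rw [hc0, zero_mul])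
      have hpt := hpart t ht
      have key : g t - ∑ j ∈ Finset.Icc (-m) m, c j * f j t
          = ∑ j ∈ Finset.Icc (-m) m, (g t - c j) * f j t := by
        have h6 : ∑ j ∈ Finset.Icc (-m) m, (g t - c j) * f j t
            = (∑ j ∈ Finset.Icc (-m) m, g t * f j t) - ∑ j ∈ Finset.Icc (-m) m, c j * f j t := by
          rw [← Finset.sum_sub_distrib]
          exact Finset.sum_congr rfl fun j _ => by ring
        rw [h6, ← Finset.mul_sum, hpt, mul_one]
      rw [herase, key]
      calc |∑ j ∈ Finset.Icc (-m) m, (g t - c j) * f j t|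
          ≤ ∑ j ∈ Finset.Icc (-m) m, |(g t - c j) * f j t| := Finset.abs_sum_le_sum_abs _ _
        _ ≤ ∑ j ∈ Finset.Icc (-m) m, K * f j t := by
            refine Finset.sum_le_sum fun j _ => ?_
            rw [abs_mul, abs_of_nonneg (hfnn j t)]
            rcases eq_or_ne (f j t) 0 with h0 | h0
            · rw [h0, mul_zero, mul_zero]
            · exact mul_le_mul_of_nonneg_right (hcj j t ht h0) (hfnn j t)
        _ = K := by rw [← Finset.mul_sum, hpt, mul_one]
    have habs2 : ∀ t c : ℝ, |t| ≤ R → |t - c| ≤ δ → |t*t - c^2| ≤ 3*R*δ := by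
      intro t c h1 h2
      have hc : |c| ≤ R + δ := by
        have h7 := abs_sub_abs_le_abs_sub c t
        rw [abs_sub_comm] at h7
        linarith
      have hfac : t*t - c^2 = (t - c) * (t + c) := by ring
      rw [hfac, abs_mul]
      have h3 : |t + c| ≤ 3*R := by
        calc |t + c| ≤ |t| + |c| := abs_add_le t c
          _ ≤ 3*R := by linarith
      calc |t - c| * |t + c| ≤ δ * (3*R) := by
            apply mul_le_mul h2 h3 (abs_nonneg _) hδpos.le
        _ = 3*R*δ := by ring
    refine ⟨cfcₙ (fun t => ∑ j ∈ s, ((j:ℝ)*δ) * f j t) a,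
            cfcₙ (fun t => ∑ j ∈ s, (((j:ℝ)*δ)^2) * f j t) a, ?_, ?_, ?_⟩
    · have hTb : ∀ (c : ℤ → ℝ), T (∑ j ∈ s, c j • y j) = ∑ j ∈ s, c j • T (y j) := by
        intro c
        rw [map_sum]
        exact Finset.sum_congr rfl fun j _ => T.map_smul_of_tower (c j) (y j)
      rw [hsplit (fun j => (j:ℝ)*δ), hsplit (fun j => ((j:ℝ)*δ)^2), hTb, hTb]
      refine jensen_finite s (fun j => (j:ℝ)*δ) (fun j => T (y j))
        (fun j hj => hTpos _ (hynn j hj)) ?_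
      have h1 : ∑ j ∈ s, T (y j) = T (∑ j ∈ s, y j) := (map_sum T _ s).symm
      have h2 : (∑ j ∈ s, y j) = cfcₙ (fun t => ∑ j ∈ s, f j t) a := by
        have h8 := hsplit (fun _ => 1)
        simp only [one_mul, one_smul] at h8
        exact h8.symm
      rw [h1, h2]
      refine (hTcontr _).trans (norm_cfcₙ_le fun t ht => ?_)
      rw [Real.norm_eq_abs, abs_of_nonneg (Finset.sum_nonneg fun j _ => hfnn j t)]
      exact hple t
    · have hsub : a - cfcₙ (fun t => ∑ j ∈ s, ((j:ℝ)*δ) * f j t) a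
          = cfcₙ (fun t : ℝ => t - ∑ j ∈ s, ((j:ℝ)*δ) * f j t) a := by
        nth_rewrite 1 [← cfcₙ_id' ℝ a ha]
        exact (cfcₙ_sub (fun t : ℝ => t) _ a (by fun_prop) rfl (hsum_cont _) (hsum_zero _)).symm
      rw [hsub]
      refine norm_cfcₙ_le fun t ht => ?_
      rw [Real.norm_eq_abs]
      exact hpoint (fun j => (j:ℝ)*δ) (fun t => t) δ (by push_cast; ring)
        (fun j t _ h => hsupp j t h) t (hspec t ht)
    · have haa : a * a = cfcₙ (fun t : ℝ => t * t) a := by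
        conv_lhs => rw [← cfcₙ_id' ℝ a ha]
        exact (cfcₙ_mul (fun t : ℝ => t) (fun t : ℝ => t) a (by fun_prop) rfl
          (by fun_prop) rfl).symm
      have hsub : a * a - cfcₙ (fun t => ∑ j ∈ s, (((j:ℝ)*δ)^2) * f j t) a
          = cfcₙ (fun t : ℝ => t * t - ∑ j ∈ s, (((j:ℝ)*δ)^2) * f j t) a := by
        conv_lhs => rw [haa]
        exact (cfcₙ_sub (fun t : ℝ => t * t) _ a (by fun_prop) (by norm_num)
          (hsum_cont _) (hsum_zero _)).symm
      rw [hsub]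
      refine norm_cfcₙ_le fun t ht => ?_
      rw [Real.norm_eq_abs]
      refine hpoint (fun j => ((j:ℝ)*δ)^2) (fun t => t * t) (3*R*δ) (by push_cast; ring)
        (fun j t htR h => habs2 t ((j:ℝ)*δ) htR ?_) t (hspec t ht)
      have := hsupp j t h
      rwa [show (t : ℝ) - (j:ℝ)*δ = t - j*δ from by push_cast; ring]
  -- limit argument
  choose bf cf h1 h2 h3 using main
  have hδ0 : Tendsto (fun k : ℕ => ‖a‖/((k:ℝ)+1)) atTop (nhds 0) := by
    have h := tendsto_const_div_atTop_nhds_zero_nat ‖a‖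
    have h' := h.comp (tendsto_add_atTop_nat 1)
    have heq : (fun k : ℕ => ‖a‖/((k:ℝ)+1)) = (fun k : ℕ => ‖a‖ / ((k + 1 : ℕ):ℝ)) := by
      funext k
      push_cast
      ring
    rw [heq]
    exact h'
  have htb : Tendsto (fun k => T (bf k)) atTop (nhds (T a)) := by
    rw [tendsto_iff_norm_sub_tendsto_zero]
    refine squeeze_zero (fun k => norm_nonneg _) (fun k => ?_) hδ0
    calc ‖T (bf k) - T a‖ = ‖T (bf k - a)‖ := by rw [map_sub]
      _ ≤ ‖bf k - a‖ := hTcontr _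
      _ = ‖a - bf k‖ := norm_sub_rev _ _
      _ ≤ ‖a‖/((k:ℝ)+1) := h2 k
  have htc : Tendsto (fun k => T (cf k)) atTop (nhds (T (a * a))) := by
    rw [tendsto_iff_norm_sub_tendsto_zero]
    refine squeeze_zero (fun k => norm_nonneg _) (fun k => ?_) (by simpa using hδ0.const_mul (3*‖a‖))
    calc ‖T (cf k) - T (a * a)‖ = ‖T (cf k - a * a)‖ := by rw [map_sub]
      _ ≤ ‖cf k - a * a‖ := hTcontr _
      _ = ‖a * a - cf k‖ := norm_sub_rev _ _
      _ ≤ 3*‖a‖*(‖a‖/((k:ℝ)+1)) := h3 k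
  exact le_of_tendsto_of_tendsto' (htb.mul htb) htc h1

end CStar

/-- If `T` is a bijective bounded linear operator on a C*-algebra `A` (with inverse `S`)
such that both `T` and `S` are contractive and positive, then `T` is a Jordan automorphism:
`T a * T a = T (a * a)` for all self-adjoint `a`, and consequently `T` preserves the
Jordan product `x ∘ y = (x * y + y * x) / 2` of self-adjoint elements. -/
theorem stmt_0 {A : Type*} [NonUnitalCStarAlgebra A] [PartialOrder A] [StarOrderedRing A]
    (T S : A →L[ℂ] A)
    (hST : ∀ x, S (T x) = x) (hTS : ∀ x, T (S x) = x)
    (hTnorm : ‖T‖ ≤ 1) (hSnorm : ‖S‖ ≤ 1)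
    (hTpos : ∀ a : A, 0 ≤ a → 0 ≤ T a) (hSpos : ∀ a : A, 0 ≤ a → 0 ≤ S a) :
    (∀ a : A, IsSelfAdjoint a → T a * T a = T (a * a)) ∧
    (∀ x y : A, IsSelfAdjoint x → IsSelfAdjoint y →
      T ((2⁻¹ : ℂ) • (x * y + y * x)) = (2⁻¹ : ℂ) • (T x * T y + T y * T x)) := by
  have hTmono : ∀ x y : A, x ≤ y → T x ≤ T y := by
    intro x y h
    have h0 := hTpos _ (sub_nonneg.mpr h)
    rw [map_sub] at h0
    exact sub_nonneg.mp h0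
  have hTsa : ∀ a : A, IsSelfAdjoint a → IsSelfAdjoint (T a) := by
    intro a ha
    have h1 : a⁺ - a⁻ = a := CFC.posPart_sub_negPart a ha
    have h2 : T a = T (a⁺) - T (a⁻) := by rw [← map_sub, h1]
    rw [h2]
    exact (IsSelfAdjoint.of_nonneg (hTpos _ (CFC.posPart_nonneg a))).sub
      (.of_nonneg (hTpos _ (CFC.negPart_nonneg a)))
  have hsq : ∀ a : A, IsSelfAdjoint a → T a * T a = T (a * a) := by
    intro a ha
    refine le_antisymm (schwarz_ineq T hTnorm hTpos ha) ?_
    have h2 := schwarz_ineq S hSnorm hSpos (hTsa a ha)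
    rw [hST] at h2
    have h3 := hTmono _ _ h2
    rwa [hTS] at h3
  refine ⟨hsq, fun x y hx hy => ?_⟩
  have hxy := hsq (x + y) (hx.add hy)
  rw [map_add] at hxy
  have hx2 := hsq x hx
  have hy2 := hsq y hy
  have hmid : T (x*y + y*x) = T x * T y + T y * T x := by
    have expand : (x+y)*(x+y) = x*x + (x*y + y*x) + y*y := by noncomm_ring
    rw [expand, map_add, map_add, ← hx2, ← hy2] at hxy
    have expand2 : (T x + T y)*(T x + T y)
        = T x * T x + (T x * T y + T y * T x) + T y * T y := by noncomm_ring
    rw [expand2] at hxy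
    have h5 := add_right_cancel hxy
    exact (add_left_cancel h5).symm
  rw [map_smul, hmid]
end

section
/- Let A be a C*-algebra and let T : A → A be a bijective bounded linear operator. If both T and T⁻¹ are contractive Schwarz operators, then T(x)* T(y) = T(x* y) for all x, y ∈ A; in particular, T is a C*-automorphism (a bijective *-algebra homomorphism). -/
/-- If `T` is a bijective bounded linear operator on a C*-algebra `A` (with inverse `S`)
such that both `T` and `S` are contractive Schwarz operators, then
`star (T x) * T y = T (star x * y)` for all `x y`; in particular `T` is a
C*-automorphism (star-preserving and multiplicative). -/
theorem stmt_1 {A : Type*} [NonUnitalCStarAlgebra A] [PartialOrder A] [StarOrderedRing A]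
    (T S : A →L[ℂ] A)
    (hST : ∀ x, S (T x) = x) (hTS : ∀ x, T (S x) = x)
    (hTnorm : ‖T‖ ≤ 1) (hSnorm : ‖S‖ ≤ 1)
    (hTschwarz : ∀ x : A, star (T x) * T x ≤ (‖T‖ : ℂ) • T (star x * x))
    (hSschwarz : ∀ x : A, star (S x) * S x ≤ (‖S‖ : ℂ) • S (star x * x)) :
    (∀ x y : A, star (T x) * T y = T (star x * y)) ∧
    (∀ x : A, T (star x) = star (T x)) ∧
    (∀ x y : A, T (x * y) = T x * T y) := by
  by_cases hsub : Subsingleton A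
  · exact ⟨fun x y => Subsingleton.elim _ _, fun x => Subsingleton.elim _ _,
      fun x y => Subsingleton.elim _ _⟩
  -- A is nontrivial, so ‖T‖ = ‖S‖ = 1
  have : Nontrivial A := not_subsingleton_iff_nontrivial.mp hsub
  obtain ⟨z, hz⟩ := exists_ne (0 : A)
  have hTz : ‖z‖ ≤ ‖T z‖ := by
    calc ‖z‖ = ‖S (T z)‖ := by rw [hST]
    _ ≤ ‖S‖ * ‖T z‖ := S.le_opNorm _
    _ ≤ 1 * ‖T z‖ := by
        apply mul_le_mul_of_nonneg_right hSnorm (norm_nonneg _)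
    _ = ‖T z‖ := one_mul _
  have hT1 : ‖T‖ = 1 := by
    refine le_antisymm hTnorm ?_
    have := (T.le_opNorm z).trans' hTz
    have hz' : (0 : ℝ) < ‖z‖ := norm_pos_iff.mpr hz
    nlinarith
  have hSz : ‖T z‖ ≤ ‖S (T z)‖ := by
    calc ‖T z‖ = ‖T (S (T z))‖ := by rw [hTS]
    _ ≤ ‖T‖ * ‖S (T z)‖ := T.le_opNorm _
    _ = ‖S (T z)‖ := by rw [hT1, one_mul]
  have hTz0 : T z ≠ 0 := fun h => hz (by rw [← hST z, h, map_zero])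
  have hS1 : ‖S‖ = 1 := by
    refine le_antisymm hSnorm ?_
    have := (S.le_opNorm (T z)).trans' hSz
    have hz' : (0 : ℝ) < ‖T z‖ := norm_pos_iff.mpr hTz0
    nlinarith
  have hTsch : ∀ x : A, star (T x) * T x ≤ T (star x * x) := by
    intro x
    simpa [hT1] using hTschwarz x
  have hSsch : ∀ x : A, star (S x) * S x ≤ S (star x * x) := by
    intro x
    simpa [hS1] using hSschwarz x
  -- T is a positive map
  have hTpos : ∀ a : A, 0 ≤ a → 0 ≤ T a := by
    intro a ha
    rw [StarOrderedRing.nonneg_iff] at ha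
    induction ha using AddSubmonoid.closure_induction with
    | mem s hs =>
      obtain ⟨u, rfl⟩ := hs
      exact le_trans (star_mul_self_nonneg (T u)) (hTsch u)
    | zero => simp
    | add a b _ _ ha hb => rw [map_add]; exact add_nonneg ha hb
  have hTmono : ∀ a b : A, a ≤ b → T a ≤ T b := by
    intro a b hab
    have := hTpos (b - a) (sub_nonneg.mpr hab)
    rw [map_sub] at this
    exact sub_nonneg.mp this
  -- diagonal equality
  have hdiag : ∀ x : A, star (T x) * T x = T (star x * x) := by
    intro x
    refine le_antisymm (hTsch x) ?_
    have h1 : star x * x ≤ S (star (T x) * T x) := by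
      have := hSsch (T x)
      rwa [hST] at this
    have h2 := hTmono _ _ h1
    rwa [hTS] at h2
  -- polarization
  set b : A → A → A := fun x y => star (T x) * T y - T (star x * y) with hb
  have hbdiag : ∀ x, b x x = 0 := fun x => sub_eq_zero.mpr (hdiag x)
  have hexp : ∀ x y : A, b (x + y) (x + y) = b x x + b x y + b y x + b y y := by
    intro x y
    simp only [hb, map_add, star_add, add_mul, mul_add]
    abel
  have hskew : ∀ x y : A, b x y + b y x = 0 := by
    intro x y
    have := hexp x y
    rw [hbdiag, hbdiag, hbdiag] at this
    linear_combination (norm := abel) -this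
  have hsmul1 : ∀ (c : ℂ) (x y : A), b x (c • y) = c • b x y := by
    intro c x y
    simp only [hb, map_smul, smul_sub, mul_smul_comm, smul_mul_assoc]
  have hsmul2 : ∀ (c : ℂ) (x y : A), b (c • x) y = (starRingEnd ℂ c) • b x y := by
    intro c x y
    simp only [hb, map_smul, star_smul, smul_sub, mul_smul_comm, smul_mul_assoc,
      RingHom.id_apply, starRingEnd_apply]
  have hsym : ∀ x y : A, b x y = b y x := by
    intro x y
    have h := hexp x (Complex.I • y)
    rw [hbdiag, hbdiag, hbdiag, hsmul1, hsmul2] at h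
    have h' : Complex.I • b x y + (starRingEnd ℂ Complex.I) • b y x = 0 := by
      linear_combination (norm := abel) -h
    rw [Complex.conj_I, neg_smul] at h'
    have h'' : Complex.I • (b x y - b y x) = 0 := by
      rw [smul_sub]
      linear_combination (norm := abel) h'
    have := smul_eq_zero.mp h''
    rcases this with h0 | h0
    · exact absurd h0 Complex.I_ne_zero
    · exact sub_eq_zero.mp h0
  have hbzero : ∀ x y : A, b x y = 0 := by
    intro x y
    have h1 := hskew x y
    rw [hsym x y] at h1
    have : (2 : ℂ) • b y x = 0 := by
      rw [two_smul]; exact h1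
    rcases smul_eq_zero.mp this with h0 | h0
    · norm_num at h0
    · rw [hsym]; exact h0
  have hmain : ∀ x y : A, star (T x) * T y = T (star x * y) := by
    intro x y
    have := hbzero x y
    rwa [hb, sub_eq_zero] at this
  have hstar : ∀ x : A, T (star x) = star (T x) := by
    have hTsa : ∀ a : A, IsSelfAdjoint a → IsSelfAdjoint (T a) := by
      intro a ha
      have hdec : a⁺ - a⁻ = a := CFC.posPart_sub_negPart a ha
      have hp : IsSelfAdjoint (T a⁺) := (hTpos _ (CFC.posPart_nonneg a)).isSelfAdjoint
      have hn : IsSelfAdjoint (T a⁻) := (hTpos _ (CFC.negPart_nonneg a)).isSelfAdjoint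
      rw [← hdec, map_sub]
      exact hp.sub hn
    intro x
    have hx := realPart_add_I_smul_imaginaryPart x
    have hre : IsSelfAdjoint ((realPart x : A)) := (realPart x).property
    have him : IsSelfAdjoint ((imaginaryPart x : A)) := (imaginaryPart x).property
    have hsx : star x = (realPart x : A) - Complex.I • (imaginaryPart x : A) := by
      conv_lhs => rw [← hx]
      rw [star_add, star_smul, Complex.star_def, Complex.conj_I, hre.star_eq, him.star_eq,
        neg_smul, ← sub_eq_add_neg]
    have hTre := hTsa _ hre
    have hTim := hTsa _ him
    rw [hsx, map_sub, map_smul]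
    conv_rhs => rw [← hx]
    rw [map_add, map_smul, star_add, star_smul, Complex.star_def, Complex.conj_I,
      hTre.star_eq, hTim.star_eq, neg_smul, ← sub_eq_add_neg]
  refine ⟨hmain, hstar, fun x y => ?_⟩
  have h1 := hmain (star x) y
  rw [star_star, hstar x, star_star] at h1
  exact h1.symm
end

section
/- Let A be a finite-dimensional C*-algebra and let T : A → A be a positive linear map with T(1) = 1 whose spectrum is contained in the unit circle 𝕋 = {λ ∈ ℂ : |λ| = 1}. Then T is bijective, its inverse T⁻¹ is positive, and T is a Jordan automorphism. -/
open Filter Topology ComplexStarModule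

section Aux

variable {A : Type*} [CStarAlgebra A] [PartialOrder A] [StarOrderedRing A]

lemma pum_mono (T : A →L[ℂ] A) (hpos : ∀ a : A, 0 ≤ a → 0 ≤ T a) {a b : A} (hab : a ≤ b) :
    T a ≤ T b := by
  have h := hpos (b - a) (sub_nonneg.mpr hab)
  rw [map_sub] at h
  exact sub_nonneg.mp h

lemma real_smul_eq (c : ℝ) (x : A) : (c : ℂ) • x = c • x := by
  rw [← algebraMap_smul ℂ c x]
  norm_num

lemma pum_algebraMap (T : A →L[ℂ] A) (hT1 : T 1 = 1) (c : ℝ) :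
    T (algebraMap ℝ A c) = algebraMap ℝ A c := by
  rw [Algebra.algebraMap_eq_smul_one, ← real_smul_eq, map_smul, hT1, real_smul_eq]

lemma pum_norm_sa [Nontrivial A] (T : A →L[ℂ] A) (hpos : ∀ a : A, 0 ≤ a → 0 ≤ T a)
    (hT1 : T 1 = 1) {x : A} (hx : IsSelfAdjoint x) : ‖T x‖ ≤ 3 * ‖x‖ := by
  have h1 : T x ≤ algebraMap ℝ A ‖x‖ := by
    calc T x ≤ T (algebraMap ℝ A ‖x‖) := pum_mono T hpos hx.le_algebraMap_norm_self
    _ = algebraMap ℝ A ‖x‖ := pum_algebraMap T hT1 _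
  have h2 : -(algebraMap ℝ A ‖x‖) ≤ T x := by
    calc -(algebraMap ℝ A ‖x‖) = T (-(algebraMap ℝ A ‖x‖)) := by
          rw [map_neg, pum_algebraMap T hT1]
    _ ≤ T x := pum_mono T hpos hx.neg_algebraMap_norm_le_self
  have h0 : 0 ≤ T x + algebraMap ℝ A ‖x‖ := by
    have := add_le_add_left h2 (algebraMap ℝ A ‖x‖)
    simpa using this
  have hub : T x + algebraMap ℝ A ‖x‖ ≤ algebraMap ℝ A (2 * ‖x‖) := by
    have : (2 : ℝ) * ‖x‖ = ‖x‖ + ‖x‖ := by ring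
    rw [this, map_add]
    exact add_le_add_left h1 _
  have hn := CStarAlgebra.norm_le_norm_of_nonneg_of_le h0 hub
  have halg : ∀ c : ℝ, 0 ≤ c → ‖algebraMap ℝ A c‖ = c := fun c hc => by
    rw [norm_algebraMap']
    exact Real.norm_of_nonneg hc
  rw [halg _ (by positivity)] at hn
  calc ‖T x‖ = ‖(T x + algebraMap ℝ A ‖x‖) - algebraMap ℝ A ‖x‖‖ := by rw [add_sub_cancel_right]
  _ ≤ ‖T x + algebraMap ℝ A ‖x‖‖ + ‖algebraMap ℝ A ‖x‖‖ := norm_sub_le _ _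
  _ ≤ 2 * ‖x‖ + ‖x‖ := by
      gcongr
      rw [halg _ (norm_nonneg x)]
  _ = 3 * ‖x‖ := by ring

lemma pum_norm [Nontrivial A] (T : A →L[ℂ] A) (hpos : ∀ a : A, 0 ≤ a → 0 ≤ T a)
    (hT1 : T 1 = 1) (a : A) : ‖T a‖ ≤ 6 * ‖a‖ := by
  have hre : ‖(ℜ a : A)‖ ≤ ‖a‖ := by
    rw [realPart_apply_coe]
    calc ‖(2 : ℝ)⁻¹ • (a + star a)‖ = 2⁻¹ * ‖a + star a‖ := by
          rw [norm_smul]; norm_num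
    _ ≤ 2⁻¹ * (‖a‖ + ‖a‖) := by gcongr; simpa using norm_add_le a (star a)
    _ = ‖a‖ := by ring
  have him : ‖(ℑ a : A)‖ ≤ ‖a‖ := by
    rw [imaginaryPart_apply_coe]
    calc ‖-Complex.I • (2 : ℝ)⁻¹ • (a - star a)‖ = ‖(2 : ℝ)⁻¹ • (a - star a)‖ := by
          rw [norm_smul]; simp
    _ = 2⁻¹ * ‖a - star a‖ := by rw [norm_smul]; norm_num
    _ ≤ 2⁻¹ * (‖a‖ + ‖a‖) := by gcongr; simpa using norm_sub_le a (star a)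
    _ = ‖a‖ := by ring
  calc ‖T a‖ = ‖T (ℜ a : A) + Complex.I • T (ℑ a : A)‖ := by
        rw [← map_smul, ← map_add]
        rw [realPart_add_I_smul_imaginaryPart a]
  _ ≤ ‖T (ℜ a : A)‖ + ‖Complex.I • T (ℑ a : A)‖ := norm_add_le _ _
  _ = ‖T (ℜ a : A)‖ + ‖T (ℑ a : A)‖ := by rw [norm_smul]; simp
  _ ≤ 3 * ‖(ℜ a : A)‖ + 3 * ‖(ℑ a : A)‖ := by
      gcongr
      exacts [pum_norm_sa T hpos hT1 (ℜ a).2, pum_norm_sa T hpos hT1 (ℑ a).2]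
  _ ≤ 3 * ‖a‖ + 3 * ‖a‖ := by gcongr
  _ = 6 * ‖a‖ := by ring

end Aux

section KS

variable {A : Type*} [CStarAlgebra A] [PartialOrder A] [StarOrderedRing A]

open Finset in
lemma sq_sum_le {ι : Type*} (s : Finset ι) (q : ι → A) (hq : ∀ i ∈ s, 0 ≤ q i)
    (hsum : ∑ i ∈ s, q i = 1) (lam : ι → ℝ) :
    (∑ i ∈ s, (lam i : ℂ) • q i) ^ 2 ≤ ∑ i ∈ s, ((lam i ^ 2 : ℝ) : ℂ) • q i := by
  set b : A := ∑ i ∈ s, (lam i : ℂ) • q i with hb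
  have hbsa : star b = b := by
    rw [hb, star_sum]
    refine Finset.sum_congr rfl fun i hi => ?_
    rw [star_smul, (hq i hi).isSelfAdjoint.star_eq]
    simp [Complex.conj_ofReal]
  have hkey : ∑ i ∈ s, star ((lam i : ℂ) • CFC.sqrt (q i) - CFC.sqrt (q i) * b) *
      ((lam i : ℂ) • CFC.sqrt (q i) - CFC.sqrt (q i) * b)
      = (∑ i ∈ s, ((lam i ^ 2 : ℝ) : ℂ) • q i) - b ^ 2 := by
    have hterm : ∀ i ∈ s, star ((lam i : ℂ) • CFC.sqrt (q i) - CFC.sqrt (q i) * b) *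
        ((lam i : ℂ) • CFC.sqrt (q i) - CFC.sqrt (q i) * b)
        = ((lam i ^ 2 : ℝ) : ℂ) • q i - (lam i : ℂ) • (q i * b)
          - (lam i : ℂ) • (b * q i) + b * q i * b := by
      intro i hi
      have hs : star (CFC.sqrt (q i)) = CFC.sqrt (q i) :=
        (IsSelfAdjoint.of_nonneg (CFC.sqrt_nonneg _)).star_eq
      have hss : CFC.sqrt (q i) * CFC.sqrt (q i) = q i := CFC.sqrt_mul_sqrt_self _ (hq i hi)
      rw [star_sub, star_smul, hs, star_mul, hs, hbsa]
      rw [Complex.star_def, Complex.conj_ofReal]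
      rw [sub_mul, mul_sub, mul_sub]
      rw [smul_mul_smul_comm]
      rw [smul_mul_assoc, mul_smul_comm, hss]
      have h1 : CFC.sqrt (q i) * (CFC.sqrt (q i) * b) = q i * b := by
        rw [← mul_assoc, hss]
      have h2 : b * CFC.sqrt (q i) * ((lam i : ℂ) • CFC.sqrt (q i))
          = (lam i : ℂ) • (b * q i) := by
        rw [mul_smul_comm, mul_assoc, hss]
      have h3 : b * CFC.sqrt (q i) * (CFC.sqrt (q i) * b) = b * q i * b := by
        rw [mul_assoc, ← mul_assoc (CFC.sqrt (q i)), hss, ← mul_assoc]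
      rw [h1, h3, mul_assoc b, hss]
      have hc : ((lam i ^ 2 : ℝ) : ℂ) = (lam i : ℂ) * (lam i : ℂ) := by push_cast; ring
      rw [hc, mul_smul]
      abel
    rw [Finset.sum_congr rfl hterm]
    rw [Finset.sum_add_distrib, Finset.sum_sub_distrib, Finset.sum_sub_distrib]
    have e1 : ∑ i ∈ s, (lam i : ℂ) • (q i * b) = b ^ 2 := by
      calc ∑ i ∈ s, (lam i : ℂ) • (q i * b) = ∑ i ∈ s, ((lam i : ℂ) • q i) * b :=
            Finset.sum_congr rfl fun i _ => (smul_mul_assoc _ _ _).symm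
      _ = b * b := by rw [← Finset.sum_mul, ← hb]
      _ = b ^ 2 := (sq b).symm
    have e2 : ∑ i ∈ s, (lam i : ℂ) • (b * q i) = b ^ 2 := by
      calc ∑ i ∈ s, (lam i : ℂ) • (b * q i) = ∑ i ∈ s, b * ((lam i : ℂ) • q i) :=
            Finset.sum_congr rfl fun i _ => (mul_smul_comm _ _ _).symm
      _ = b * b := by rw [← Finset.mul_sum, ← hb]
      _ = b ^ 2 := (sq b).symm
    have e3 : ∑ i ∈ s, b * q i * b = b ^ 2 := by
      calc ∑ i ∈ s, b * q i * b = ∑ i ∈ s, b * (q i * b) :=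
            Finset.sum_congr rfl fun i _ => mul_assoc _ _ _
      _ = b * ∑ i ∈ s, q i * b := (Finset.mul_sum _ _ _).symm
      _ = b * ((∑ i ∈ s, q i) * b) := by rw [← Finset.sum_mul]
      _ = b ^ 2 := by rw [hsum, one_mul, sq]
    rw [e1, e2, e3]
    abel
  have hpos : (0 : A) ≤ ∑ i ∈ s, star ((lam i : ℂ) • CFC.sqrt (q i) - CFC.sqrt (q i) * b) *
      ((lam i : ℂ) • CFC.sqrt (q i) - CFC.sqrt (q i) * b) :=
    Finset.sum_nonneg fun i _ => star_mul_self_nonneg _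
  rw [hkey] at hpos
  exact sub_nonneg.mp hpos

end KS

section Family

variable {A : Type*} [CStarAlgebra A] [PartialOrder A] [StarOrderedRing A]
  [FiniteDimensional ℂ A]

lemma spectrum_real_finite (a : A) : (spectrum ℝ a).Finite := by
  have halg : IsAlgebraic ℂ a := IsAlgebraic.of_finite ℂ a
  obtain ⟨P, hP0, hPa⟩ := halg
  have hsub : spectrum ℂ a ⊆ {z | P.IsRoot z} := by
    intro z hz
    have h1 : Polynomial.eval z P ∈ spectrum ℂ (Polynomial.aeval a P) :=
      spectrum.subset_polynomial_aeval a P ⟨z, hz, rfl⟩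
    rw [hPa] at h1
    by_contra hroot
    have hne : Polynomial.eval z P ≠ 0 := hroot
    have : IsUnit (algebraMap ℂ A (Polynomial.eval z P) - 0) := by
      rw [sub_zero]
      exact (isUnit_iff_ne_zero.mpr hne).map (algebraMap ℂ A)
    exact (spectrum.mem_iff.mp h1) this
  have hCfin : (spectrum ℂ a).Finite :=
    (Polynomial.finite_setOf_isRoot hP0).subset hsub
  have hpre : spectrum ℝ a = algebraMap ℝ ℂ ⁻¹' spectrum ℂ a :=
    (spectrum.preimage_algebraMap ℂ).symm
  rw [hpre]
  exact hCfin.preimage (Complex.ofReal_injective.injOn)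

lemma exists_spectral_family {a : A} (ha : IsSelfAdjoint a) :
    ∃ (s : Finset ℝ) (p : ℝ → A), (∀ i ∈ s, 0 ≤ p i) ∧ (∑ i ∈ s, p i = 1) ∧
      (∑ i ∈ s, (i : ℂ) • p i = a) ∧ (∑ i ∈ s, ((i ^ 2 : ℝ) : ℂ) • p i = a ^ 2) := by
  classical
  have hfin := spectrum_real_finite a
  set s : Finset ℝ := hfin.toFinset with hs
  have hσs : spectrum ℝ a ⊆ ↑s := by simp [hs]
  have hinj : Set.InjOn (id : ℝ → ℝ) ↑s := Function.injective_id.injOn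
  set f : ℝ → ℝ → ℝ := fun i x => (Lagrange.basis s id i).eval x with hf
  have hfc : ∀ i, Continuous (f i) := fun i => (Lagrange.basis s id i).continuous
  have hdelta : ∀ i ∈ s, ∀ x ∈ spectrum ℝ a, f i x = if i = x then 1 else 0 := by
    intro i hi x hx
    have hxs : x ∈ s := hσs hx
    by_cases hix : i = x
    · subst hix
      simp only [if_pos rfl]
      simpa using Lagrange.eval_basis_self hinj hi
    · simp only [if_neg hix]
      simpa using Lagrange.eval_basis_of_ne (v := (id : ℝ → ℝ)) hix hxs
  refine ⟨s, fun i => cfc (f i) a, ?_, ?_, ?_, ?_⟩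
  · intro i hi
    exact cfc_nonneg fun x hx => by
      rw [hdelta i hi x hx]; split <;> norm_num
  · calc ∑ i ∈ s, cfc (f i) a = cfc (∑ i ∈ s, f i) a :=
          (cfc_sum f a s (fun i _ => (hfc i).continuousOn)).symm
    _ = cfc (1 : ℝ → ℝ) a := by
        refine cfc_congr fun x hx => ?_
        rw [Finset.sum_apply]
        rw [Finset.sum_congr rfl fun i hi => hdelta i hi x hx]
        rw [Finset.sum_ite_eq' s x (fun _ => (1:ℝ))]
        simp [show x ∈ s from hσs hx]
    _ = 1 := cfc_one ℝ a
  · have h1 : ∀ i : ℝ, (i : ℂ) • cfc (f i) a = cfc (fun x => i * f i x) a := fun i => by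
      rw [cfc_const_mul i (f i) a (hfc i).continuousOn, real_smul_eq]
    calc ∑ i ∈ s, (i : ℂ) • cfc (f i) a = ∑ i ∈ s, cfc (fun x => i * f i x) a :=
          Finset.sum_congr rfl fun i _ => h1 i
    _ = cfc (∑ i ∈ s, fun x => i * f i x) a :=
          (cfc_sum _ a s (fun i _ => ((continuous_const.mul (hfc i))).continuousOn)).symm
    _ = cfc (id : ℝ → ℝ) a := by
        refine cfc_congr fun x hx => ?_
        rw [Finset.sum_apply]
        rw [Finset.sum_congr rfl fun i hi => by rw [hdelta i hi x hx]]
        simp only [mul_ite, mul_one, mul_zero]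
        rw [Finset.sum_ite_eq' s x (fun i => i)]
        simp [show x ∈ s from hσs hx]
    _ = a := cfc_id ℝ a
  · have h1 : ∀ i : ℝ, ((i ^ 2 : ℝ) : ℂ) • cfc (f i) a = cfc (fun x => i ^ 2 * f i x) a :=
      fun i => by
        rw [cfc_const_mul (i ^ 2) (f i) a (hfc i).continuousOn, real_smul_eq]
    calc ∑ i ∈ s, ((i ^ 2 : ℝ) : ℂ) • cfc (f i) a
        = ∑ i ∈ s, cfc (fun x => i ^ 2 * f i x) a := Finset.sum_congr rfl fun i _ => h1 i
    _ = cfc (∑ i ∈ s, fun x => i ^ 2 * f i x) a :=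
          (cfc_sum _ a s (fun i _ => ((continuous_const.mul (hfc i))).continuousOn)).symm
    _ = cfc (fun x : ℝ => x ^ 2) a := by
        refine cfc_congr fun x hx => ?_
        rw [Finset.sum_apply]
        rw [Finset.sum_congr rfl fun i hi => by rw [hdelta i hi x hx]]
        simp only [mul_ite, mul_one, mul_zero]
        rw [Finset.sum_ite_eq' s x (fun i => i ^ 2)]
        simp [show x ∈ s from hσs hx]
    _ = a ^ 2 := cfc_pow_id a 2

lemma kadison_schwarz (T : A →L[ℂ] A) (hpos : ∀ a : A, 0 ≤ a → 0 ≤ T a) (hT1 : T 1 = 1)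
    {a : A} (ha : IsSelfAdjoint a) : (T a) ^ 2 ≤ T (a ^ 2) := by
  obtain ⟨s, p, hp, h1, h2, h3⟩ := exists_spectral_family ha
  have hq : ∀ i ∈ s, 0 ≤ T (p i) := fun i hi => hpos _ (hp i hi)
  have hqsum : ∑ i ∈ s, T (p i) = 1 := by rw [← map_sum, h1, hT1]
  have hineq := sq_sum_le s (fun i => T (p i)) hq hqsum (fun i => i)
  have hl : ∑ i ∈ s, ((i : ℝ) : ℂ) • T (p i) = T a := by
    rw [← h2, map_sum]
    exact Finset.sum_congr rfl fun i _ => (map_smul T _ _).symm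
  have hr : ∑ i ∈ s, (((i : ℝ) ^ 2 : ℝ) : ℂ) • T (p i) = T (a ^ 2) := by
    rw [← h3, map_sum]
    exact Finset.sum_congr rfl fun i _ => (map_smul T _ _).symm
  rw [hl, hr] at hineq
  exact hineq

end Family

section Main

variable {A : Type*} [CStarAlgebra A] [PartialOrder A] [StarOrderedRing A]
  [FiniteDimensional ℂ A]

theorem stmt_2' (T : A →L[ℂ] A) (hTpos : ∀ a : A, 0 ≤ a → 0 ≤ T a) (hT1 : T 1 = 1)
    (hspec : spectrum ℂ T ⊆ {z : ℂ | ‖z‖ = 1}) :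
    Function.Bijective T ∧
    (∀ a : A, 0 ≤ T a → 0 ≤ a) ∧
    (∀ x y : A, IsSelfAdjoint x → IsSelfAdjoint y →
      T ((2⁻¹ : ℂ) • (x * y + y * x)) = (2⁻¹ : ℂ) • (T x * T y + T y * T x)) := by
  rcases subsingleton_or_nontrivial A with hA | hA
  · exact ⟨⟨fun a b _ => Subsingleton.elim a b, fun b => ⟨b, Subsingleton.elim _ _⟩⟩,
      fun a _ => le_of_eq (Subsingleton.elim _ _),
      fun x y _ _ => Subsingleton.elim _ _⟩
  -- T is a unit
  have hTunit : IsUnit T := by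
    have h0 : (0 : ℂ) ∉ spectrum ℂ T := fun h => by simpa using hspec h
    rw [spectrum.zero_notMem_iff] at h0
    exact h0
  set R : A →L[ℂ] A := ↑hTunit.unit⁻¹ with hR
  have hRT : ∀ a, R (T a) = a := by
    intro a
    have h : R * T = 1 := by
      rw [hR]; exact Units.inv_mul_of_eq hTunit.unit_spec
    calc R (T a) = (R * T) a := rfl
    _ = a := by rw [h]; rfl
  have hTR : ∀ a, T (R a) = a := by
    intro a
    have h : T * R = 1 := by
      rw [hR]; exact Units.mul_inv_of_eq hTunit.unit_spec
    calc T (R a) = (T * R) a := rfl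
    _ = a := by rw [h]; rfl
  have hbij : Function.Bijective T :=
    ⟨Function.LeftInverse.injective hRT, fun b => ⟨R b, hTR b⟩⟩
  -- positivity and unitality of powers
  have hTn_pos : ∀ n : ℕ, ∀ a : A, 0 ≤ a → 0 ≤ (T ^ n) a := by
    intro n
    induction n with
    | zero => intro a ha; simpa using ha
    | succ n ih =>
      intro a ha
      rw [pow_succ]
      exact ih (T a) (hTpos a ha)
  have hTn_1 : ∀ n : ℕ, (T ^ n) 1 = 1 := by
    intro n
    induction n with
    | zero => simp
    | succ n ih => rw [pow_succ]; show (T ^ n) (T 1) = 1; rw [hT1, ih]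
  have hbound : ∀ n : ℕ, ∀ a : A, ‖(T ^ n) a‖ ≤ 6 * ‖a‖ := fun n =>
    pum_norm (T ^ n) (hTn_pos n) (hTn_1 n)
  have hnorm : ∀ n : ℕ, ‖(T ^ n : A →L[ℂ] A)‖ ≤ 6 := fun n =>
    ContinuousLinearMap.opNorm_le_bound _ (by norm_num) (hbound n)
  -- convergent subsequence of powers
  obtain ⟨S, -, φ, hφ, hconv⟩ :=
    tendsto_subseq_of_bounded (Metric.isBounded_closedBall (x := (0 : A →L[ℂ] A)) (r := 6))
      (fun n => mem_closedBall_zero_iff.mpr (hnorm n))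
  -- the space of vectors killed asymptotically
  set W : Submodule ℂ A :=
    { carrier := {v | Tendsto (fun n => (T ^ n) v) atTop (𝓝 0)}
      add_mem' := by
        intro v w hv hw
        have := Tendsto.add hv hw
        simpa [map_add] using this
      zero_mem' := by simpa [map_zero] using (tendsto_const_nhds :
        Tendsto (fun _ : ℕ => (0 : A)) atTop (𝓝 0))
      smul_mem' := by
        intro c v hv
        have := hv.const_smul c
        simpa only [Set.mem_setOf_eq, map_smul, smul_zero] using this } with hW
  have hmemW : ∀ v : A, v ∈ W ↔ Tendsto (fun n => (T ^ n) v) atTop (𝓝 0) := fun v => Iff.rfl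
  -- anything S kills is in W
  have hSW : ∀ v : A, S v = 0 → v ∈ W := by
    intro v hv
    have hconv_v : Tendsto (fun k => (T ^ φ k) v) atTop (𝓝 0) := by
      have h1 : Tendsto (fun k => ((fun n => T ^ n) ∘ φ) k v) atTop (𝓝 (S v)) :=
        ((ContinuousLinearMap.apply ℂ A v).continuous.tendsto S).comp hconv
      rw [hv] at h1
      exact h1
    rw [hmemW]
    rw [NormedAddCommGroup.tendsto_nhds_zero] at hconv_v ⊢
    intro ε hε
    obtain ⟨k, hk⟩ := (hconv_v (ε / 6) (by positivity)).exists
    rw [Filter.eventually_atTop]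
    refine ⟨φ k, fun n hn => ?_⟩
    have hsplit : (T ^ n) v = (T ^ (n - φ k)) ((T ^ φ k) v) := by
      rw [← ContinuousLinearMap.mul_apply, ← pow_add, Nat.sub_add_cancel hn]
    rw [hsplit]
    calc ‖(T ^ (n - φ k)) ((T ^ φ k) v)‖ ≤ 6 * ‖(T ^ φ k) v‖ := hbound _ _
    _ < 6 * (ε / 6) := by gcongr
    _ = ε := by ring
  -- W is trivial
  have hWbot : W = ⊥ := by
    by_contra hne
    have : Nontrivial W := Submodule.nontrivial_iff_ne_bot.mpr hne
    have hWinv : ∀ v ∈ W, T v ∈ W := by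
      intro v hv
      rw [hmemW] at hv ⊢
      have h1 : Tendsto (fun n => (T ^ (n + 1)) v) atTop (𝓝 0) :=
        hv.comp (tendsto_add_atTop_nat 1)
      refine h1.congr fun n => ?_
      rw [pow_succ, ContinuousLinearMap.mul_apply]
    set f : W →ₗ[ℂ] W := (T : A →ₗ[ℂ] A).restrict hWinv with hf
    obtain ⟨μ, hμ⟩ := Module.End.exists_eigenvalue f
    obtain ⟨w, hw⟩ := hμ.exists_hasEigenvector
    have hTw : T (w : A) = μ • (w : A) := by
      have h1 : f w = μ • w := hw.apply_eq_smul
      have h2 : (f w : A) = T (w : A) := rfl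
      rw [← h2, h1]
      simp
    have hw0 : (w : A) ≠ 0 := fun h => hw.right (ZeroMemClass.coe_eq_zero.mp h)
    have hμspec : μ ∈ spectrum ℂ T := by
      rw [spectrum.mem_iff]
      intro hunit
      have hker : (algebraMap ℂ (A →L[ℂ] A) μ - T) (w : A) = 0 := by
        rw [ContinuousLinearMap.sub_apply, hTw]
        rw [Algebra.algebraMap_eq_smul_one]
        simp
      have hone : (↑hunit.unit⁻¹ : A →L[ℂ] A) * (algebraMap ℂ (A →L[ℂ] A) μ - T) = 1 := by
        exact Units.inv_mul_of_eq hunit.unit_spec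
      apply hw0
      calc (w : A) = ((↑hunit.unit⁻¹ : A →L[ℂ] A) * (algebraMap ℂ (A →L[ℂ] A) μ - T)) (w : A) := by
            rw [hone, ContinuousLinearMap.one_apply]
      _ = (↑hunit.unit⁻¹ : A →L[ℂ] A) ((algebraMap ℂ (A →L[ℂ] A) μ - T) (w : A)) := rfl
      _ = 0 := by rw [hker, map_zero]
    have hμ1 : ‖μ‖ = 1 := hspec hμspec
    have hμn : ∀ n : ℕ, (T ^ n) (w : A) = μ ^ n • (w : A) := by
      intro n
      induction n with
      | zero => simp
      | succ n ih =>
        rw [pow_succ, ContinuousLinearMap.mul_apply, hTw, map_smul, ih, smul_smul, pow_succ,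
          mul_comm]
    have hmem := (hmemW (w : A)).mp w.2
    have hnormconst : ∀ n : ℕ, ‖(T ^ n) (w : A)‖ = ‖(w : A)‖ := by
      intro n
      rw [hμn n, norm_smul, norm_pow, hμ1, one_pow, one_mul]
    have h0 : Tendsto (fun n : ℕ => ‖(T ^ n) (w : A)‖) atTop (𝓝 0) := by
      simpa using hmem.norm
    have : ‖(w : A)‖ = 0 :=
      tendsto_nhds_unique (tendsto_const_nhds.congr fun n => (hnormconst n).symm) h0
    exact hw0 (norm_eq_zero.mp this)
  -- S is a unit
  have hSinj : Function.Injective S := by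
    intro v v' hvv'
    have h : S (v - v') = 0 := by rw [map_sub, hvv', sub_self]
    have := hSW _ h
    rw [hWbot] at this
    simpa [sub_eq_zero] using this
  have hSbij : Function.Bijective S :=
    ⟨hSinj, LinearMap.injective_iff_surjective.mp hSinj⟩
  have hSunit : IsUnit S := by
    set e : A ≃ₗ[ℂ] A := LinearEquiv.ofBijective (S : A →ₗ[ℂ] A) hSbij with he
    set e' : A ≃L[ℂ] A := e.toContinuousLinearEquiv with he'
    refine isUnit_iff_exists.mpr ⟨(e'.symm : A →L[ℂ] A), ?_, ?_⟩
    · ext x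
      show S ((e'.symm : A →L[ℂ] A) x) = x
      have : S (e.symm x) = x := e.apply_symm_apply x
      exact this
    · ext x
      show e'.symm (S x) = x
      have hx : S x = e' x := rfl
      rw [hx]
      exact e'.symm_apply_apply x
  -- inverse positivity via limits
  have hcont : ContinuousAt Ring.inverse S := NormedRing.inverse_continuousAt hSunit.unit
  have hconv2 : Tendsto (fun k => T ^ φ (k + 1)) atTop (𝓝 S) :=
    hconv.comp (tendsto_add_atTop_nat 1)
  have hinvconv : Tendsto (fun k => Ring.inverse (T ^ φ k)) atTop (𝓝 (Ring.inverse S)) := by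
    have h := hcont.tendsto.comp hconv
    exact h
  have hmul : Tendsto (fun k => (T ^ φ (k + 1)) * Ring.inverse (T ^ φ k)) atTop
      (𝓝 (S * Ring.inverse S)) := hconv2.mul hinvconv
  have hSinv : S * Ring.inverse S = 1 := Ring.mul_inverse_cancel S hSunit
  have hident : ∀ k, (T ^ φ (k + 1)) * Ring.inverse (T ^ φ k) = T ^ (φ (k + 1) - φ k) := by
    intro k
    have hk : φ k ≤ φ (k + 1) := (hφ (Nat.lt_succ_self k)).le
    have hu : IsUnit (T ^ φ k) := hTunit.pow _
    rw [← hu.unit_spec, Ring.inverse_unit]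
    have hsplit : T ^ φ (k + 1) = T ^ (φ (k + 1) - φ k) * ↑hu.unit := by
      rw [hu.unit_spec, ← pow_add, Nat.sub_add_cancel hk]
    rw [hsplit, mul_assoc, Units.mul_inv, mul_one]
  have hlim1 : Tendsto (fun k => T ^ (φ (k + 1) - φ k)) atTop (𝓝 (1 : A →L[ℂ] A)) := by
    have h := hmul.congr fun k => hident k
    rwa [hSinv] at h
  have hRpos : ∀ a : A, 0 ≤ a → 0 ≤ R a := by
    intro a ha
    set m : ℕ → ℕ := fun k => φ (k + 1) - φ k with hm
    have happly : Tendsto (fun k => (T ^ m k) a) atTop (𝓝 a) := by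
      have h := ((ContinuousLinearMap.apply ℂ A a).continuous.tendsto
        (1 : A →L[ℂ] A)).comp hlim1
      exact h
    have hRapply : Tendsto (fun k => R ((T ^ m k) a)) atTop (𝓝 (R a)) :=
      (R.continuous.tendsto a).comp happly
    have hposk : ∀ k, 0 ≤ R ((T ^ m k) a) := by
      intro k
      have hmk : m k - 1 + 1 = m k := Nat.succ_pred_eq_of_pos (by
        have h := hφ (lt_add_one k)
        show 0 < φ (k + 1) - φ k
        omega)
      have h1 : R ((T ^ m k) a) = (T ^ (m k - 1)) a := by
        have h2 : (T ^ m k) a = T ((T ^ (m k - 1)) a) := by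
          rw [← ContinuousLinearMap.mul_apply, ← pow_succ', hmk]
        rw [h2, hRT]
      rw [h1]
      exact hTn_pos _ a ha
    exact CStarAlgebra.isClosed_nonneg.mem_of_tendsto hRapply
      (Filter.Eventually.of_forall hposk)
  refine ⟨hbij, fun a ha => ?_, ?_⟩
  · have h := hRpos (T a) ha
    rwa [hRT] at h
  · -- the Jordan property
    have hR1 : R 1 = 1 := by
      calc R 1 = R (T 1) := by rw [hT1]
      _ = 1 := hRT 1
    have hTsa : ∀ x : A, IsSelfAdjoint x → IsSelfAdjoint (T x) := by
      intro x hx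
      have hdecomp : T x = T (x⁺) - T (x⁻) := by
        rw [← map_sub]
        exact congrArg T (CFC.posPart_sub_negPart x hx).symm
      rw [hdecomp]
      exact ((hTpos _ (CFC.posPart_nonneg x)).isSelfAdjoint).sub
        ((hTpos _ (CFC.negPart_nonneg x)).isSelfAdjoint)
    have hsq : ∀ x : A, IsSelfAdjoint x → T (x ^ 2) = (T x) ^ 2 := by
      intro x hx
      have le1 := kadison_schwarz T hTpos hT1 hx
      have le2 := kadison_schwarz R hRpos hR1 (hTsa x hx)
      rw [hRT] at le2
      have le2' : T (x ^ 2) ≤ (T x) ^ 2 := by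
        have h := pum_mono T hTpos le2
        rwa [hTR] at h
      exact le_antisymm le2' le1
    intro x y hx hy
    have hexp : (x + y) ^ 2 = x ^ 2 + (x * y + y * x) + y ^ 2 := by noncomm_ring
    have hexp2 : (T x + T y) ^ 2 = (T x) ^ 2 + (T x * T y + T y * T x) + (T y) ^ 2 := by
      noncomm_ring
    have hkey : T (x * y + y * x) = T x * T y + T y * T x := by
      have h := hsq (x + y) (hx.add hy)
      rw [hexp] at h
      rw [map_add T (x ^ 2 + (x * y + y * x)) (y ^ 2), map_add T (x ^ 2) (x * y + y * x)] at h
      rw [map_add T x y, hexp2, hsq x hx, hsq y hy] at h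
      exact add_left_cancel (add_right_cancel h)
    rw [map_smul, hkey]


end Main


/-- Let `A` be a finite-dimensional C*-algebra and `T : A → A` a positive unital linear map
whose spectrum is contained in the unit circle. Then `T` is bijective, its inverse is
positive, and `T` is a Jordan automorphism. -/
theorem stmt_2 {A : Type*} [CStarAlgebra A] [PartialOrder A] [StarOrderedRing A]
    [FiniteDimensional ℂ A]
    (T : A →L[ℂ] A) (hTpos : ∀ a : A, 0 ≤ a → 0 ≤ T a) (hT1 : T 1 = 1)
    (hspec : spectrum ℂ T ⊆ {z : ℂ | ‖z‖ = 1}) :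
    Function.Bijective T ∧
    (∀ a : A, 0 ≤ T a → 0 ≤ a) ∧
    (∀ x y : A, IsSelfAdjoint x → IsSelfAdjoint y →
      T ((2⁻¹ : ℂ) • (x * y + y * x)) = (2⁻¹ : ℂ) • (T x * T y + T y * T x)) := by
  exact stmt_2' T hTpos hT1 hspec
end

section
/- Let A be a finite-dimensional C*-algebra and let T : A → A be a Schwarz operator with T(1) = 1 whose spectrum is contained in the unit circle 𝕋 = {λ ∈ ℂ : |λ| = 1}. Then T is a C*-automorphism, i.e., T is bijective and T(x* y) = T(x)* T(y) for all x, y ∈ A. -/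
open Filter Topology

section AuxLemmas

variable {A : Type*} [CStarAlgebra A] [PartialOrder A] [StarOrderedRing A]

private lemma aux_sq (a : A) (ha : 0 ≤ a) : ∃ b : A, a = star b * b :=
  ⟨CFC.sqrt a, by rw [(IsSelfAdjoint.of_nonneg (CFC.sqrt_nonneg a)).star_eq,
    CFC.sqrt_mul_sqrt_self a ha]⟩

private lemma aux_polar (T : A →L[ℂ] A)
    (hm : ∀ z : A, T (star z * z) = star (T z) * T z) (x y : A) :
    T (star x * y) = star (T x) * T y := by
  set F : A → A → A := fun a b => T (star a * b) - star (T a) * T b with hF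
  have h0 : ∀ z, F z z = 0 := fun z => by simp [hF, hm z]
  have hadd1 : ∀ a b c, F (a + b) c = F a c + F b c := by
    intro a b c
    simp only [hF, star_add, add_mul, map_add]
    abel
  have hadd2 : ∀ a b c, F a (b + c) = F a b + F a c := by
    intro a b c
    simp only [hF, mul_add, map_add]
    abel
  have hs1 : ∀ a b, F (Complex.I • a) b = -(Complex.I • F a b) := by
    intro a b
    simp only [hF, star_smul, Complex.star_def, Complex.conj_I, smul_mul_assoc,
      mul_smul_comm, map_smul]
    module
  have hs2 : ∀ a b, F a (Complex.I • b) = Complex.I • F a b := by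
    intro a b
    simp only [hF, mul_smul_comm, map_smul, smul_sub]
  have e1 : F x y + F y x = 0 := by
    have h := h0 (x + y)
    rw [hadd1, hadd2, hadd2, h0 x, h0 y] at h
    simpa using h
  have e3 : F y x = -F x y := eq_neg_of_add_eq_zero_right e1
  have e2 : -(Complex.I • F x y) + Complex.I • F y x = 0 := by
    have h := h0 (Complex.I • x + y)
    rw [hadd1, hadd2, hadd2, hs1, hs2, hs1, hs2, h0, h0] at h
    simpa using h
  rw [e3, smul_neg] at e2
  have h4 : Complex.I • F x y + Complex.I • F x y = 0 := by
    rwa [← neg_add, neg_eq_zero] at e2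
  rw [← two_smul ℂ, smul_smul] at h4
  have h5 : F x y = 0 := by
    have h6 := congrArg (fun z => (2 * Complex.I)⁻¹ • z) h4
    simpa [smul_smul, inv_mul_cancel₀ (mul_ne_zero two_ne_zero Complex.I_ne_zero)] using h6
  simpa [hF, sub_eq_zero] using h5

end AuxLemmas

section SpecLemmas

variable {A : Type*} [CStarAlgebra A] [PartialOrder A] [StarOrderedRing A]
  [FiniteDimensional ℂ A]

private lemma aux_spec_eq (f : A →L[ℂ] A) :
    spectrum ℂ f = spectrum ℂ (f : A →ₗ[ℂ] A) := by
  ext z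
  rw [spectrum.mem_iff, spectrum.mem_iff]
  apply not_congr
  rw [ContinuousLinearMap.isUnit_iff_bijective, Module.End.isUnit_iff]
  have h : ⇑(algebraMap ℂ (A →L[ℂ] A) z - f) =
      ⇑(algebraMap ℂ (Module.End ℂ A) z - (f : A →ₗ[ℂ] A)) := by
    ext x
    simp [Algebra.algebraMap_eq_smul_one, Module.algebraMap_end_apply]
  rw [h]

end SpecLemmas
/-- Let `A` be a finite-dimensional C*-algebra and `T : A → A` a unital Schwarz operator
whose spectrum is contained in the unit circle. Then `T` is a C*-automorphism:
`T` is bijective and `T (star x * y) = star (T x) * T y` for all `x y`. -/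
theorem stmt_3 {A : Type*} [CStarAlgebra A] [PartialOrder A] [StarOrderedRing A]
    [FiniteDimensional ℂ A]
    (T : A →L[ℂ] A)
    (hschwarz : ∀ x : A, star (T x) * T x ≤ (‖T‖ : ℂ) • T (star x * x))
    (hT1 : T 1 = 1)
    (hspec : spectrum ℂ T ⊆ {z : ℂ | ‖z‖ = 1}) :
    Function.Bijective T ∧ ∀ x y : A, T (star x * y) = star (T x) * T y := by
  obtain hA | hA := subsingleton_or_nontrivial A
  · exact ⟨⟨fun x y _ => Subsingleton.elim x y, fun x => ⟨x, Subsingleton.elim _ _⟩⟩,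
      fun x y => Subsingleton.elim _ _⟩
  -- `‖T‖ ≥ 1`
  have hge : (1 : ℝ) ≤ ‖T‖ := by
    have h := T.le_opNorm 1
    rwa [hT1, norm_one, mul_one] at h
  have hTnz : ‖T‖ ≠ 0 := (lt_of_lt_of_le one_pos hge).ne'
  -- `T` is a positive map
  have hpos : ∀ a : A, 0 ≤ a → 0 ≤ T a := by
    intro a ha
    obtain ⟨b, rfl⟩ := aux_sq a ha
    have h1 : (0 : A) ≤ (‖T‖ : ℂ) • T (star b * b) :=
      le_trans (star_mul_self_nonneg (T b)) (hschwarz b)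
    rw [Complex.coe_smul] at h1
    have h2 := smul_nonneg (inv_nonneg.mpr (norm_nonneg T)) h1
    rwa [smul_smul, inv_mul_cancel₀ hTnz, one_smul] at h2
  have hmono : ∀ a b : A, a ≤ b → T a ≤ T b := by
    intro a b hab
    have h := hpos _ (sub_nonneg.mpr hab)
    rw [map_sub] at h
    exact sub_nonneg.mp h
  have halg : ∀ r : ℝ, T (algebraMap ℝ A r) = algebraMap ℝ A r := by
    intro r
    rw [Algebra.algebraMap_eq_smul_one, ← Complex.coe_smul, map_smul, hT1]
  -- pointwise norm bound
  have hbd : ∀ x : A, ‖T x‖ ^ 2 ≤ ‖T‖ * ‖x‖ ^ 2 := by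
    intro x
    have h1 : star (T x) * T x ≤ (‖T‖ : ℂ) • algebraMap ℝ A ‖star x * x‖ := by
      refine le_trans (hschwarz x) ?_
      rw [Complex.coe_smul, Complex.coe_smul]
      refine smul_le_smul_of_nonneg_left ?_ (norm_nonneg T)
      exact le_trans (hmono _ _ (IsSelfAdjoint.le_algebraMap_norm_self
        (IsSelfAdjoint.star_mul_self x))) (le_of_eq (halg _))
    have h2 : ‖star (T x) * T x‖ ≤ ‖(‖T‖ : ℂ) • algebraMap ℝ A ‖star x * x‖‖ :=
      CStarAlgebra.norm_le_norm_of_nonneg_of_le (star_mul_self_nonneg _) h1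
    have h3 : ‖(‖T‖ : ℂ) • algebraMap ℝ A ‖star x * x‖‖ = ‖T‖ * ‖x‖ ^ 2 := by
      rw [norm_smul, Algebra.algebraMap_eq_smul_one, norm_smul, norm_one, mul_one,
        Complex.norm_real, Real.norm_eq_abs, Real.norm_eq_abs, abs_of_nonneg (norm_nonneg T),
        abs_of_nonneg (norm_nonneg _), CStarRing.norm_star_mul_self, sq]
    calc ‖T x‖ ^ 2 = ‖star (T x) * T x‖ := by rw [CStarRing.norm_star_mul_self, sq]
      _ ≤ ‖(‖T‖ : ℂ) • algebraMap ℝ A ‖star x * x‖‖ := h2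
      _ = ‖T‖ * ‖x‖ ^ 2 := h3
  -- `‖T‖ = 1`
  have hnorm : ‖T‖ = 1 := by
    have hle : ‖T‖ ≤ Real.sqrt ‖T‖ := by
      refine T.opNorm_le_bound (Real.sqrt_nonneg _) ?_
      intro x
      have h1 : ‖T x‖ ^ 2 ≤ (Real.sqrt ‖T‖ * ‖x‖) ^ 2 := by
        rw [mul_pow, Real.sq_sqrt (norm_nonneg T)]
        exact hbd x
      have h2 : (0 : ℝ) ≤ Real.sqrt ‖T‖ * ‖x‖ := by positivity
      nlinarith [norm_nonneg (T x)]
    nlinarith [Real.sq_sqrt (norm_nonneg T), Real.sqrt_nonneg ‖T‖]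
  have hsch1 : ∀ x : A, star (T x) * T x ≤ T (star x * x) := by
    intro x
    have h := hschwarz x
    rwa [hnorm, Complex.ofReal_one, one_smul] at h
  -- properties of powers
  have hP1 : ∀ n : ℕ, (T ^ n) 1 = 1 := by
    intro n
    induction n with
    | zero => simp
    | succ n ih => rw [pow_succ', ContinuousLinearMap.mul_apply, ih, hT1]
  have hPn : ∀ (n : ℕ) (x : A), star ((T ^ n) x) * (T ^ n) x ≤ (T ^ n) (star x * x) := by
    intro n
    induction n with
    | zero => intro x; simp
    | succ n ih =>
      intro x
      rw [pow_succ', ContinuousLinearMap.mul_apply, ContinuousLinearMap.mul_apply]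
      exact le_trans (hsch1 ((T ^ n) x)) (hmono _ _ (ih x))
  have hbound : ∀ n : ℕ, ‖T ^ n‖ ≤ 1 := by
    intro n
    induction n with
    | zero => simpa [ContinuousLinearMap.one_def] using ContinuousLinearMap.norm_id_le
    | succ n ih =>
      rw [pow_succ]
      refine le_trans (norm_mul_le _ _) ?_
      rw [hnorm, mul_one]
      exact ih
  -- a convergent subsequence of powers
  have hmem : ∀ n : ℕ, T ^ (n + 1) ∈ Metric.closedBall (0 : A →L[ℂ] A) 1 := fun n =>
    mem_closedBall_zero_iff.mpr (hbound (n + 1))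
  obtain ⟨L, -, φ, hφ, hLtend⟩ :=
    (isCompact_closedBall (0 : A →L[ℂ] A) 1).tendsto_subseq hmem
  -- `T` is invertible
  have hTunit : IsUnit T := by
    have h0 : (0 : ℂ) ∉ spectrum ℂ T := by
      intro h
      have := hspec h
      simp at this
    rw [spectrum.notMem_iff, map_zero, zero_sub] at h0
    simpa using h0.neg
  -- determinant machinery
  set b : Module.Basis (Fin (Module.finrank ℂ A)) ℂ A := Module.finBasis ℂ A with hb
  set Ψ : (A →L[ℂ] A) →+* Matrix (Fin (Module.finrank ℂ A)) (Fin (Module.finrank ℂ A)) ℂ :=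
    ((algEquivMatrix b).toRingEquiv.toRingHom).comp ContinuousLinearMap.toLinearMapRingHom
    with hΨ
  have hΨcont : Continuous Ψ := by
    change Continuous fun f : A →L[ℂ] A =>
      ((algEquivMatrix b).toLinearMap ∘ₗ ContinuousLinearMap.coeLM ℂ) f
    exact ((algEquivMatrix b).toLinearMap ∘ₗ
      ContinuousLinearMap.coeLM ℂ).continuous_of_finiteDimensional
  have hdcont : Continuous fun f : A →L[ℂ] A => (Ψ f).det := hΨcont.matrix_det
  have hΨspec : ∀ f : A →L[ℂ] A, spectrum ℂ (Ψ f) = spectrum ℂ f := by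
    intro f
    rw [aux_spec_eq f]
    exact AlgEquiv.spectrum_eq (algEquivMatrix b) (f : A →ₗ[ℂ] A)
  have hmsprod : ∀ s : Multiset ℂ, (∀ z ∈ s, ‖z‖ = 1) → ‖s.prod‖ = 1 := by
    intro s
    induction s using Multiset.induction with
    | empty => intro _; simp
    | cons a t ih =>
      intro h
      rw [Multiset.prod_cons, norm_mul, h a (Multiset.mem_cons_self a t),
        ih (fun z hz => h z (Multiset.mem_cons_of_mem hz)), one_mul]
  have hdetT : ‖(Ψ T).det‖ = 1 := by
    rw [Matrix.det_eq_prod_roots_charpoly]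
    refine hmsprod _ ?_
    intro μ hμ
    have hroot : ((Ψ T).charpoly).IsRoot μ := (Polynomial.mem_roots'.mp hμ).2
    have hdet0 : (Matrix.scalar (Fin (Module.finrank ℂ A)) μ - Ψ T).det = 0 := by
      have h1 := eval_det (Matrix.charmatrix (Ψ T)) μ
      rw [Matrix.matPolyEquiv_charmatrix, Polynomial.eval_sub, Polynomial.eval_X,
        Polynomial.eval_C] at h1
      rw [← h1]
      exact hroot
    have hmemsp : μ ∈ spectrum ℂ (Ψ T) := by
      rw [spectrum.mem_iff]
      intro hunit
      rw [Matrix.isUnit_iff_isUnit_det, isUnit_iff_ne_zero] at hunit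
      refine hunit ?_
      have hsc : algebraMap ℂ (Matrix (Fin (Module.finrank ℂ A)) (Fin (Module.finrank ℂ A)) ℂ) μ
          = Matrix.scalar (Fin (Module.finrank ℂ A)) μ := by
        ext i j
        simp [Matrix.algebraMap_matrix_apply, Matrix.scalar_apply, Matrix.diagonal]
      rw [hsc]
      exact hdet0
    exact hspec ((hΨspec T) ▸ hmemsp)
  have hdetL : (Ψ L).det ≠ 0 := by
    have h1 : Filter.Tendsto (fun k => (Ψ ((fun n => T ^ (n + 1)) (φ k))).det)
        Filter.atTop (nhds ((Ψ L).det)) := (hdcont.tendsto L).comp hLtend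
    have h2 : ∀ k : ℕ, ‖(Ψ (T ^ (φ k + 1))).det‖ = 1 := by
      intro k
      rw [map_pow, Matrix.det_pow, norm_pow, hdetT, one_pow]
    have h3 : Filter.Tendsto (fun k => ‖(Ψ (T ^ (φ k + 1))).det‖)
        Filter.atTop (nhds ‖(Ψ L).det‖) := h1.norm
    have h4 : ‖(Ψ L).det‖ = 1 := by
      refine tendsto_nhds_unique h3 ?_
      have : (fun k => ‖(Ψ (T ^ (φ k + 1))).det‖) = fun _ => (1 : ℝ) := funext h2
      rw [this]
      exact tendsto_const_nhds
    intro h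
    rw [h] at h4
    simp at h4
  have hLunit : IsUnit L := by
    rw [ContinuousLinearMap.isUnit_iff_bijective]
    have hu : IsUnit (Ψ L) := (Matrix.isUnit_iff_isUnit_det _).mpr (isUnit_iff_ne_zero.mpr hdetL)
    have h2 := hu.map (algEquivMatrix b).symm
    have h3 : (algEquivMatrix b).symm (Ψ L) = (L : A →ₗ[ℂ] A) :=
      (algEquivMatrix b).symm_apply_apply (L : A →ₗ[ℂ] A)
    rw [h3] at h2
    have h4 := (Module.End.isUnit_iff _).mp h2
    exact h4
  -- names for the units
  obtain ⟨u, hu⟩ := hTunit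
  set S : A →L[ℂ] A := ((u⁻¹ : (A →L[ℂ] A)ˣ) : A →L[ℂ] A) with hS
  -- inverse is a limit of powers
  have hinv : Filter.Tendsto (fun k => Ring.inverse ((fun n => T ^ (n + 1)) (φ k)))
      Filter.atTop (nhds (Ring.inverse L)) := by
    have h := NormedRing.inverse_continuousAt hLunit.unit
    rw [IsUnit.unit_spec] at h
    exact h.tendsto.comp hLtend
  have hTW : Filter.Tendsto
      (fun k => T ^ (φ (k + 1) + 1) * (Ring.inverse (T ^ (φ k + 1)) * S))
      Filter.atTop (nhds (L * (Ring.inverse L * S))) := by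
    have ha : Filter.Tendsto (fun k => T ^ (φ (k + 1) + 1)) Filter.atTop (nhds L) :=
      hLtend.comp (Filter.tendsto_add_atTop_nat 1)
    have hb2 : Filter.Tendsto (fun k => Ring.inverse (T ^ (φ k + 1)) * S)
        Filter.atTop (nhds (Ring.inverse L * S)) := hinv.mul tendsto_const_nhds
    exact ha.mul hb2
  have hfun : ∀ k : ℕ, T ^ (φ (k + 1) + 1) * (Ring.inverse (T ^ (φ k + 1)) * S)
      = T ^ (φ (k + 1) - φ k - 1) := by
    intro k
    have hlt : φ k < φ (k + 1) := hφ (by omega)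
    have hsplit : φ (k + 1) + 1 = (φ (k + 1) - φ k - 1) + (φ k + 1 + 1) := by omega
    rw [← hu]
    rw [← Units.val_pow_eq_pow_val, ← Units.val_pow_eq_pow_val, ← Units.val_pow_eq_pow_val,
      Ring.inverse_unit]
    rw [hS, ← Units.val_mul, ← Units.val_mul]
    congr 1
    rw [hsplit, pow_add]
    rw [mul_assoc]
    congr 1
    have hgrp : u ^ (φ k + 1 + 1) * ((u ^ (φ k + 1))⁻¹ * u⁻¹) = 1 := by group
    rw [hgrp, mul_one]
  have hlim : L * (Ring.inverse L * S) = S := by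
    rw [← mul_assoc, Ring.mul_inverse_cancel L hLunit, one_mul]
  have htendS : Filter.Tendsto (fun k => T ^ (φ (k + 1) - φ k - 1))
      Filter.atTop (nhds S) := by
    rw [← hlim]
    exact hTW.congr hfun
  have hev : ∀ x : A, Filter.Tendsto (fun k => (T ^ (φ (k + 1) - φ k - 1)) x)
      Filter.atTop (nhds (S x)) := fun x =>
    ((ContinuousLinearMap.apply ℂ A x).continuous.tendsto S).comp htendS
  have hS1 : S 1 = 1 := by
    have h := hev 1
    rw [show (fun k => (T ^ (φ (k + 1) - φ k - 1)) (1 : A)) = fun _ => (1 : A) from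
      funext (fun k => hP1 _)] at h
    exact tendsto_nhds_unique h tendsto_const_nhds
  have hSsch : ∀ x : A, star (S x) * S x ≤ S (star x * x) := by
    intro x
    rw [← sub_nonneg]
    have hcl : IsClosed {a : A | 0 ≤ a} := CStarAlgebra.isClosed_nonneg
    refine hcl.mem_of_tendsto ((hev (star x * x)).sub (((hev x).star).mul (hev x))) ?_
    exact Filter.Eventually.of_forall (fun k => sub_nonneg.mpr (hPn _ x))
  have hSmono : ∀ a c : A, a ≤ c → S a ≤ S c := by
    intro a c hac
    have hSpos : ∀ a : A, 0 ≤ a → 0 ≤ S a := by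
      intro a ha
      obtain ⟨w, rfl⟩ := aux_sq a ha
      exact le_trans (star_mul_self_nonneg (S w)) (hSsch w)
    have h := hSpos _ (sub_nonneg.mpr hac)
    rw [map_sub] at h
    exact sub_nonneg.mp h
  have hST : ∀ x : A, S (T x) = x := by
    intro x
    have h : S * T = 1 := by
      rw [hS, ← hu, ← Units.val_mul, inv_mul_cancel u, Units.val_one]
    calc S (T x) = (S * T) x := rfl
      _ = x := by rw [h]; rfl
  have hTS : ∀ x : A, T (S x) = x := by
    intro x
    have h : T * S = 1 := by
      rw [hS, ← hu, ← Units.val_mul, mul_inv_cancel u, Units.val_one]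
    calc T (S x) = (T * S) x := rfl
      _ = x := by rw [h]; rfl
  have hm : ∀ z : A, T (star z * z) = star (T z) * T z := by
    intro z
    have h1 : star (T z) * T z ≤ T (star z * z) := hsch1 z
    have h2 : S (star (T z) * T z) ≤ star z * z := by
      have h := hSmono _ _ h1
      rwa [hST] at h
    have h3 : star z * z ≤ S (star (T z) * T z) := by
      have h := hSsch (T z)
      rwa [hST] at h
    have h4 : S (star (T z) * T z) = star z * z := le_antisymm h2 h3
    have h5 := congrArg T h4
    rw [hTS] at h5
    exact h5.symm
  exact ⟨ContinuousLinearMap.isUnit_iff_bijective.mp ⟨u, hu⟩, aux_polar T hm⟩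
end

section
/- Let T be an n×n complex matrix which is power bounded (i.e., sup_{k ≥ 0} ‖T^k‖ < ∞) and whose spectrum (set of eigenvalues) is contained in the unit circle 𝕋 = {λ ∈ ℂ : |λ| = 1}. Then there exists a strictly increasing sequence of positive integers n₁ < n₂ < … such that T^{n_k} converges to the identity matrix as k → ∞. -/
attribute [local instance] Matrix.linftyOpNormedRing Matrix.linftyOpNormedAlgebra

open Filter Matrix Polynomial Bornology
open scoped NNReal

/-- Every root of the characteristic polynomial lies in the spectrum. -/
lemma root_mem_spectrum {n : ℕ} (T : Matrix (Fin n) (Fin n) ℂ) {μ : ℂ}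
    (hμ : μ ∈ T.charpoly.roots) : μ ∈ spectrum ℂ T := by
  have hroot : T.charpoly.eval μ = 0 :=
    (Polynomial.mem_roots T.charpoly_monic.ne_zero).mp hμ
  rw [spectrum.mem_iff]
  intro hunit
  have hdet0 : ((algebraMap ℂ (Matrix (Fin n) (Fin n) ℂ)) μ - T).det = 0 := by
    have hmap : ((charmatrix T).map (Polynomial.evalRingHom μ)) =
        (algebraMap ℂ (Matrix (Fin n) (Fin n) ℂ)) μ - T := by
      ext i j
      by_cases h : i = j
      · subst h
        simp [charmatrix_apply_eq, Matrix.algebraMap_matrix_apply]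
      · simp [charmatrix_apply_ne _ _ _ h, Matrix.algebraMap_matrix_apply, h]
    calc ((algebraMap ℂ (Matrix (Fin n) (Fin n) ℂ)) μ - T).det
        = ((charmatrix T).map (Polynomial.evalRingHom μ)).det := by rw [hmap]
      _ = (Polynomial.evalRingHom μ) (charmatrix T).det := ((Polynomial.evalRingHom μ).map_det _).symm
      _ = T.charpoly.eval μ := rfl
      _ = 0 := hroot
  have := ((Matrix.isUnit_iff_isUnit_det _).mp hunit)
  rw [hdet0] at this
  exact (not_isUnit_zero this)

/-- Let `T` be an `n × n` complex matrix which is power bounded (all powers are bounded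
entrywise by a common constant, equivalently bounded in any matrix norm) and whose
spectrum is contained in the unit circle. Then there is a strictly increasing sequence of
positive integers `ns k` with `T ^ ns k → 1` (entrywise, i.e. in any norm). -/
theorem stmt_7 (n : ℕ) (T : Matrix (Fin n) (Fin n) ℂ)
    (hpb : ∃ C : ℝ, ∀ k : ℕ, ∀ i j, ‖(T ^ k) i j‖ ≤ C)
    (hspec : spectrum ℂ T ⊆ {z : ℂ | ‖z‖ = 1}) :
    ∃ ns : ℕ → ℕ, StrictMono ns ∧ (∀ k, 0 < ns k) ∧
      ∀ i j, Filter.Tendsto (fun k => (T ^ ns k) i j) Filter.atTop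
        (nhds ((1 : Matrix (Fin n) (Fin n) ℂ) i j)) := by
  rcases Nat.eq_zero_or_pos n with hn | hn
  · subst hn
    exact ⟨fun k => k + 1, fun a b h => Nat.add_lt_add_right h 1, fun k => k.succ_pos,
      fun i j => i.elim0⟩
  haveI : ProperSpace (Matrix (Fin n) (Fin n) ℂ) :=
    FiniteDimensional.proper ℂ (Matrix (Fin n) (Fin n) ℂ)
  obtain ⟨C, hC⟩ := hpb
  have hC0 : 0 ≤ C := le_trans (norm_nonneg _) (hC 0 ⟨0, hn⟩ ⟨0, hn⟩)
  -- the determinant of every power has norm 1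
  have hdet : ‖T.det‖ = 1 := by
    rw [Matrix.det_eq_prod_roots_charpoly]
    rw [show ‖(T.charpoly.roots).prod‖ = ((T.charpoly.roots).map (fun z : ℂ => ‖z‖)).prod from
      map_multiset_prod (normHom : ℂ →*₀ ℝ) T.charpoly.roots]
    refine Multiset.prod_eq_one ?_
    intro x hx
    rw [Multiset.mem_map] at hx
    obtain ⟨μ, hμ, rfl⟩ := hx
    exact hspec (root_mem_spectrum T hμ)
  have hdetpow : ∀ k : ℕ, ‖(T ^ k).det‖ = 1 := by
    intro k
    rw [Matrix.det_pow, norm_pow, hdet, one_pow]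
  -- entrywise norm bounds vs the matrix norm
  have hentry : ∀ (A : Matrix (Fin n) (Fin n) ℂ) i j, ‖A i j‖ ≤ ‖A‖ := by
    intro A i j
    rw [← coe_nnnorm, ← coe_nnnorm, NNReal.coe_le_coe]
    rw [Matrix.linfty_opNNNorm_def]
    calc ‖A i j‖₊ ≤ ∑ j', ‖A i j'‖₊ :=
          Finset.single_le_sum (f := fun j' => ‖A i j'‖₊) (fun _ _ => zero_le) (Finset.mem_univ j)
      _ ≤ _ := Finset.le_sup (f := fun i => ∑ j', ‖A i j'‖₊) (Finset.mem_univ i)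
  have hnormle : ∀ k : ℕ, ‖T ^ k‖ ≤ n * C := by
    intro k
    rw [Matrix.linfty_opNorm_def]
    have hsup : (Finset.univ.sup fun i => ∑ j, ‖(T ^ k) i j‖₊) ≤ (n : ℝ≥0) * C.toNNReal := by
      refine Finset.sup_le fun i _ => ?_
      calc ∑ j, ‖(T ^ k) i j‖₊ ≤ ∑ _j : Fin n, C.toNNReal :=
            Finset.sum_le_sum fun j _ => by
              rw [← norm_toNNReal]
              exact Real.toNNReal_le_toNNReal (hC k i j)
        _ = (n : ℝ≥0) * C.toNNReal := by
            simp [Finset.sum_const, Finset.card_univ, nsmul_eq_mul]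
    calc ((Finset.univ.sup fun i => ∑ j, ‖(T ^ k) i j‖₊ : ℝ≥0) : ℝ)
        ≤ (((n : ℝ≥0) * C.toNNReal : ℝ≥0) : ℝ) := NNReal.coe_le_coe.mpr hsup
      _ = n * C := by
          rw [NNReal.coe_mul, Real.coe_toNNReal C hC0]
          simp
  -- the powers lie in a bounded set
  set s : Set (Matrix (Fin n) (Fin n) ℂ) := Set.range (fun k : ℕ => T ^ k) with hs
  have hsb : IsBounded s := by
    apply (Metric.isBounded_closedBall (x := (0 : Matrix (Fin n) (Fin n) ℂ)) (r := n * C)).subset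
    rintro A ⟨k, rfl⟩
    rw [Metric.mem_closedBall, dist_zero_right]
    exact hnormle k
  -- a uniform bound on inverses of closure elements
  have hKdet : ∀ A ∈ closure s, ‖A.det‖ = 1 := by
    have hcl : IsClosed {A : Matrix (Fin n) (Fin n) ℂ | ‖A.det‖ = 1} :=
      isClosed_eq (continuous_id.matrix_det.norm) continuous_const
    intro A hA
    exact hcl.closure_subset_iff.mpr (by rintro B ⟨k, rfl⟩; exact hdetpow k) hA
  have hKunit : ∀ A ∈ closure s, IsUnit A := by
    intro A hA
    refine (Matrix.isUnit_iff_isUnit_det A).mpr (isUnit_iff_ne_zero.mpr ?_)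
    intro h0
    have := hKdet A hA
    rw [h0] at this
    simp at this
  obtain ⟨B, hB0, hB⟩ : ∃ B : ℝ, 0 ≤ B ∧ ∀ A ∈ closure s, ‖Ring.inverse A‖ ≤ B := by
    have hKc : IsCompact (closure s) := hsb.isCompact_closure
    have hcont : ContinuousOn (Ring.inverse : Matrix (Fin n) (Fin n) ℂ → Matrix (Fin n) (Fin n) ℂ) (closure s) := by
      intro A hA
      have hu := hKunit A hA
      have := NormedRing.inverse_continuousAt hu.unit
      rw [IsUnit.unit_spec] at this
      exact this.continuousWithinAt
    have himg : IsCompact ((Ring.inverse : Matrix (Fin n) (Fin n) ℂ → Matrix (Fin n) (Fin n) ℂ) '' closure s) :=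
      hKc.image_of_continuousOn hcont
    obtain ⟨B, hB⟩ := himg.isBounded.exists_norm_le
    exact ⟨max B 0, le_max_right _ _, fun A hA =>
      le_trans (hB _ (Set.mem_image_of_mem _ hA)) (le_max_left _ _)⟩
  -- extract a convergent subsequence of powers
  obtain ⟨L, hL, φ, hφ, hconv⟩ :=
    tendsto_subseq_of_bounded hsb (fun k : ℕ => Set.mem_range_self (f := fun k : ℕ => T ^ k) k)
  have hcauchy : CauchySeq (fun j => T ^ φ j) := hconv.cauchySeq
  have hφadd : ∀ a k : ℕ, φ a + k ≤ φ (a + k) := by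
    intro a k
    induction k with
    | zero => simp
    | succ k ih =>
        calc φ a + (k + 1) = (φ a + k) + 1 := by ring
          _ ≤ φ (a + k) + 1 := by omega
          _ ≤ φ (a + k + 1) := Nat.succ_le_of_lt (hφ (lt_add_one _))
  -- key approximation step
  have key : ∀ (m : ℕ) (ε : ℝ), 0 < ε → ∃ N, m < N ∧ ‖T ^ N - 1‖ < ε := by
    intro m ε hε
    have hε' : 0 < ε / (B + 1) := by positivity
    obtain ⟨J, hJ⟩ := Metric.cauchySeq_iff'.mp hcauchy (ε / (B + 1)) hε'
    set a := φ J
    set b := φ (J + (m + 1))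
    have hab : a + (m + 1) ≤ b := hφadd J (m + 1)
    refine ⟨b - a, by omega, ?_⟩
    have hba : a + (b - a) = b := by omega
    have hsplit : T ^ b = T ^ a * T ^ (b - a) := by
      rw [← pow_add, hba]
    have hu : IsUnit (T ^ a) := hKunit _ (subset_closure ⟨a, rfl⟩)
    have heq : T ^ (b - a) - 1 = Ring.inverse (T ^ a) * (T ^ b - T ^ a) := by
      rw [hsplit, mul_sub, ← mul_assoc, Ring.inverse_mul_cancel _ hu, one_mul]
    have hdist : ‖T ^ b - T ^ a‖ < ε / (B + 1) := by
      have := hJ (J + (m + 1)) (by omega)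
      rwa [dist_eq_norm] at this
    calc ‖T ^ (b - a) - 1‖ = ‖Ring.inverse (T ^ a) * (T ^ b - T ^ a)‖ := by rw [heq]
      _ ≤ ‖Ring.inverse (T ^ a)‖ * ‖T ^ b - T ^ a‖ := norm_mul_le _ _
      _ ≤ B * (ε / (B + 1)) := by
          apply mul_le_mul (hB _ (subset_closure ⟨a, rfl⟩)) hdist.le (norm_nonneg _) hB0
      _ < (B + 1) * (ε / (B + 1)) := by
          apply mul_lt_mul_of_pos_right (by linarith) hε'
      _ = ε := by field_simp
  -- build the sequence
  choose F hF1 hF2 using key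
  set ns : ℕ → ℕ := fun k =>
    Nat.rec (F 0 1 one_pos) (fun k ih => F ih (1 / (k + 2)) (by positivity)) k with hns
  have hns0 : ns 0 = F 0 1 one_pos := rfl
  have hnssucc : ∀ k, ns (k + 1) = F (ns k) (1 / (k + 2)) (by positivity) := fun k => rfl
  have hmono : StrictMono ns := by
    apply strictMono_nat_of_lt_succ
    intro k
    rw [hnssucc]
    exact hF1 _ _ _
  have hpos : ∀ k, 0 < ns k := by
    intro k
    have h0 : 0 < ns 0 := by rw [hns0]; exact hF1 _ _ _
    exact lt_of_lt_of_le h0 (hmono.monotone (Nat.zero_le k))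
  have hbound : ∀ k, ‖T ^ ns k - 1‖ ≤ 1 / (k + 1) := by
    intro k
    cases k with
    | zero => rw [hns0]; simpa using (hF2 0 1 one_pos).le
    | succ k =>
        have := (hF2 (ns k) (1 / (k + 2)) (by positivity)).le
        rw [← hnssucc] at this
        convert this using 2
        case e'_4 => push_cast; ring
        case e'_2 => rfl
  have htends : Tendsto (fun k => ‖T ^ ns k - 1‖) atTop (nhds 0) := by
    apply squeeze_zero (fun k => norm_nonneg _) hbound
    exact tendsto_one_div_add_atTop_nhds_zero_nat
  refine ⟨ns, hmono, hpos, fun i j => ?_⟩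
  rw [tendsto_iff_dist_tendsto_zero]
  apply squeeze_zero (fun k => dist_nonneg) (fun k => ?_) htends
  rw [dist_eq_norm]
  calc ‖(T ^ ns k) i j - (1 : Matrix (Fin n) (Fin n) ℂ) i j‖ = ‖(T ^ ns k - 1) i j‖ := by rw [Matrix.sub_apply]
    _ ≤ ‖T ^ ns k - 1‖ := hentry _ i j
end

section
/- Let A be a C*-algebra (not necessarily unital) and let T : A → A be a positive surjective linear isometry. Then T is bijective, its inverse T⁻¹ is positive, and T maps the positive cone A₊ onto A₊. -/
section Aux

lemma aux_algebraMap_nonneg {B : Type*} [CStarAlgebra B] [PartialOrder B] [StarOrderedRing B]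
    {r : ℝ} (hr : 0 ≤ r) : 0 ≤ algebraMap ℝ B r := by
  have : algebraMap ℝ B r = star (algebraMap ℝ B (Real.sqrt r)) * algebraMap ℝ B (Real.sqrt r) := by
    rw [← algebraMap_star_comm, star_trivial, ← map_mul, Real.mul_self_sqrt hr]
  rw [this]
  exact star_mul_self_nonneg _

lemma aux_norm_sub_le_max_unital {B : Type*} [CStarAlgebra B] [PartialOrder B]
    [StarOrderedRing B] {a c : B} (ha : 0 ≤ a) (hc : 0 ≤ c) :
    ‖a - c‖ ≤ max ‖a‖ ‖c‖ := by
  set M := max ‖a‖ ‖c‖ with hM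
  have hsa : IsSelfAdjoint a := .of_nonneg ha
  have hsc : IsSelfAdjoint c := .of_nonneg hc
  have hsac : IsSelfAdjoint (a - c) := hsa.sub hsc
  have h1 : a - c ≤ algebraMap ℝ B M := by
    calc a - c ≤ a - 0 := by exact sub_le_sub_left (by simpa using hc) a |>.trans (le_refl _)
    _ = a := by rw [sub_zero]
    _ ≤ algebraMap ℝ B ‖a‖ := hsa.le_algebraMap_norm_self
    _ ≤ algebraMap ℝ B M := by
        rw [← sub_nonneg, ← map_sub]
        exact aux_algebraMap_nonneg (by simp [hM, sub_nonneg])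
  have h2 : c - a ≤ algebraMap ℝ B M := by
    calc c - a ≤ c - 0 := sub_le_sub_left (by simpa using ha) c
    _ = c := by rw [sub_zero]
    _ ≤ algebraMap ℝ B ‖c‖ := hsc.le_algebraMap_norm_self
    _ ≤ algebraMap ℝ B M := by
        rw [← sub_nonneg, ← map_sub]
        exact aux_algebraMap_nonneg (by simp [hM, sub_nonneg])
  have hspec1 : ∀ x ∈ spectrum ℝ (a - c), x ≤ M :=
    (le_algebraMap_iff_spectrum_le (a := a - c) hsac).mp h1
  have hspec2 : ∀ x ∈ spectrum ℝ (c - a), x ≤ M :=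
    (le_algebraMap_iff_spectrum_le (a := c - a) (hsc.sub hsa)).mp h2
  rcases subsingleton_or_nontrivial B with hB | hB
  · have : a - c = 0 := Subsingleton.elim _ _
    rw [this, norm_zero]
    exact le_max_of_le_left (norm_nonneg a)
  · rcases CStarAlgebra.norm_or_neg_norm_mem_spectrum hsac with h | h
    · exact hspec1 _ h
    · have hmem : ‖a - c‖ ∈ spectrum ℝ (c - a) := by
        rw [← neg_sub a c, ← spectrum.neg_eq]
        simpa using Set.neg_mem_neg.mpr h
      exact hspec2 _ hmem

lemma aux_norm_sub_le_max {A : Type*} [NonUnitalCStarAlgebra A] [PartialOrder A]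
    [StarOrderedRing A] {a c : A} (ha : 0 ≤ a) (hc : 0 ≤ c) :
    ‖a - c‖ ≤ max ‖a‖ ‖c‖ := by
  have h1 : ‖a - c‖ = ‖((a - c : A) : Unitization ℂ A)‖ := (Unitization.norm_inr _).symm
  rw [h1, Unitization.inr_sub ℂ a c, ← Unitization.norm_inr (𝕜 := ℂ) a, ← Unitization.norm_inr (𝕜 := ℂ) c]
  exact aux_norm_sub_le_max_unital (Unitization.inr_nonneg_iff.mpr ha)
    (Unitization.inr_nonneg_iff.mpr hc)

lemma aux_nonneg_of_forall {A : Type*} [NonUnitalCStarAlgebra A] [PartialOrder A]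
    [StarOrderedRing A] {a : A} (ha : IsSelfAdjoint a)
    (h : ∀ c : A, 0 ≤ c → ‖a - c‖ ≤ max ‖a‖ ‖c‖) : 0 ≤ a := by
  by_contra hneg
  rw [StarOrderedRing.nonneg_iff_quasispectrum_nonneg (R := ℝ) a] at hneg
  push_neg at hneg
  obtain ⟨x, hx, hxneg⟩ := hneg
  set s : ℝ := -x with hs
  have hs0 : 0 < s := by simp [hs]; linarith
  set t : ℝ := ‖a‖ with ht
  have ht0 : 0 ≤ t := norm_nonneg a
  set f : ℝ → ℝ := fun y => t * (min 1 (max 0 (-(y / s)))) with hf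
  have hfcont : Continuous f := by fun_prop
  have hf0 : f 0 = 0 := by simp [hf]
  have hfx : f x = t := by
    have : -(x / s) = 1 := by field_simp [hs]; exact hs.symm
    simp [hf, this]
  have hfnonneg : ∀ y : ℝ, 0 ≤ f y := fun y =>
    mul_nonneg ht0 (le_min zero_le_one (le_max_left 0 _))
  have hfle : ∀ y : ℝ, f y ≤ t := fun y => by
    calc f y ≤ t * 1 := mul_le_mul_of_nonneg_left (min_le_left _ _) ht0
    _ = t := mul_one t
  set c : A := cfcₙ f a with hc
  have hcpos : 0 ≤ c := cfcₙ_nonneg fun y _ => hfnonneg y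
  have hcnorm : ‖c‖ ≤ t := norm_cfcₙ_le fun y _ => by
    rw [Real.norm_eq_abs, abs_of_nonneg (hfnonneg y)]; exact hfle y
  have hsub : a - c = cfcₙ (fun y => y - f y) a := by
    rw [cfcₙ_sub (fun y : ℝ => y) f a (by fun_prop) rfl (hfcont.continuousOn) hf0,
      cfcₙ_id' ℝ a]
  have hlow : ‖x - f x‖ ≤ ‖a - c‖ := by
    rw [hsub]
    exact norm_apply_le_norm_cfcₙ (fun y => y - f y) a hx
      ((continuous_id.sub hfcont).continuousOn) (by simp [hf0]) ha
  have hval : ‖x - f x‖ = s + t := by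
    rw [hfx]
    have : x - t = -(s + t) := by rw [hs]; ring
    rw [this, norm_neg, Real.norm_eq_abs, abs_of_nonneg (by linarith)]
  have hup : ‖a - c‖ ≤ t := by
    exact (h c hcpos).trans (max_le le_rfl hcnorm)
  linarith [hval ▸ hlow]

end Aux

/-- Every positive surjective linear isometry `T` on a (not necessarily unital) C*-algebra
is bijective, has a positive inverse, and maps the positive cone onto the positive cone. -/
theorem stmt_9 {A : Type*} [NonUnitalCStarAlgebra A] [PartialOrder A] [StarOrderedRing A]
    (T : A →L[ℂ] A) (hTpos : ∀ a : A, 0 ≤ a → 0 ≤ T a)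
    (hsurj : Function.Surjective T) (hiso : ∀ x : A, ‖T x‖ = ‖x‖) :
    Function.Bijective T ∧ (∀ a : A, 0 ≤ T a → 0 ≤ a) ∧
      T '' {a : A | 0 ≤ a} = {a : A | 0 ≤ a} := by
  have hinj : Function.Injective T := by
    intro x y hxy
    have h0 : ‖x - y‖ = 0 := by rw [← hiso, map_sub, hxy, sub_self, norm_zero]
    rw [norm_eq_zero, sub_eq_zero] at h0
    exact h0
  have hsa : ∀ h : A, IsSelfAdjoint h → IsSelfAdjoint (T h) := by
    intro h hh
    have hdecomp : h⁺ - h⁻ = h := CFC.posPart_sub_negPart h hh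
    rw [← hdecomp, map_sub]
    exact (IsSelfAdjoint.of_nonneg (hTpos _ (CFC.posPart_nonneg h))).sub
      (.of_nonneg (hTpos _ (CFC.negPart_nonneg h)))
  have hinvpos : ∀ a : A, 0 ≤ T a → 0 ≤ a := by
    intro a hTa
    have h1 : IsSelfAdjoint (T a) := .of_nonneg hTa
    have h2 : IsSelfAdjoint (T (realPart a)) := hsa _ (realPart a).2
    have h3 : IsSelfAdjoint (T (imaginaryPart a)) := hsa _ (imaginaryPart a).2
    have hdecomp : T a = T (realPart a) + Complex.I • T (imaginaryPart a) := by
      conv_lhs => rw [← realPart_add_I_smul_imaginaryPart a]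
      rw [map_add, map_smul]
    have hkey : T (realPart a) + Complex.I • T (imaginaryPart a)
        = T (realPart a) - Complex.I • T (imaginaryPart a) := by
      conv_lhs => rw [← hdecomp, ← h1.star_eq, hdecomp]
      rw [star_add, h2.star_eq, star_smul, h3.star_eq, Complex.star_def, Complex.conj_I,
        neg_smul, sub_eq_add_neg]
    have hTk : T (imaginaryPart a) = 0 := by
      have h4 : Complex.I • T (imaginaryPart a) = 0 := by
        have := sub_eq_zero.mpr hkey
        have h5 : (2 : ℂ) • (Complex.I • T (imaginaryPart a)) = 0 := by
          rw [two_smul]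
          calc Complex.I • T (imaginaryPart a) + Complex.I • T (imaginaryPart a)
              = T (realPart a) + Complex.I • T (imaginaryPart a)
                - (T (realPart a) - Complex.I • T (imaginaryPart a)) := by abel
          _ = 0 := by rw [hkey, sub_self]
        have := smul_eq_zero.mp h5
        simpa using this
      have := smul_eq_zero.mp h4
      simpa [Complex.I_ne_zero] using this
    have hk0 : (imaginaryPart a : A) = 0 := by
      have := hiso (imaginaryPart a)
      rw [hTk, norm_zero] at this
      exact norm_eq_zero.mp this.symm
    have hasa : IsSelfAdjoint a := by
      have : a = (realPart a : A) := by
        conv_lhs => rw [← realPart_add_I_smul_imaginaryPart a]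
        rw [hk0, smul_zero, add_zero]
      rw [this]
      exact (realPart a).2
    apply aux_nonneg_of_forall hasa
    intro c hc
    rw [← hiso (a - c), map_sub]
    calc ‖T a - T c‖ ≤ max ‖T a‖ ‖T c‖ := aux_norm_sub_le_max hTa (hTpos c hc)
      _ = max ‖a‖ ‖c‖ := by rw [hiso, hiso]
  refine ⟨⟨hinj, hsurj⟩, hinvpos, ?_⟩
  ext b
  simp only [Set.mem_image, Set.mem_setOf_eq]
  constructor
  · rintro ⟨a, ha, rfl⟩
    exact hTpos a ha
  · intro hb
    obtain ⟨a, rfl⟩ := hsurj b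
    exact ⟨a, hinvpos a hb, rfl⟩
end

section
/- Consider the commutative unital C*-algebra A = ℓ^∞(ℤ) × ℂ with unit 𝟙 = (e, 1), where e is the constant-one sequence. Let R be the right shift on ℓ^∞(ℤ), i.e., (Rx)(j) = x(j−1), let M be the multiplication operator with (Mx)(j) = x(j) for j ≠ 0 and (Mx)(0) = x(0)/2, and let e₁ ∈ ℓ^∞(ℤ) be the unit vector with value 1 at index 1 and 0 elsewhere. Define T : A → A by T(x, α) = (RMx + (α/2)·e₁, α). Then T is a positive linear operator satisfying T(𝟙) = 𝟙 and ‖Tⁿ‖ ≤ 1 for every integer n ≥ 0; moreover, T is bijective and its inverse is given by T⁻¹(x, α) = (M⁻¹Lx − α·e₀, α), where L is the left shift (Lx)(j) = x(j+1), M⁻¹ is the multiplication operator doubling the entry at index 0, and e₀ ∈ ℓ^∞(ℤ) is the unit vector with value 1 at index 0 and 0 elsewhere. -/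
open scoped ENNReal

set_option maxHeartbeats 1000000 in
set_option synthInstance.maxHeartbeats 400000 in
/-- On the commutative unital C*-algebra `A = ℓ^∞(ℤ) × ℂ`, let `T` be the operator
`T (x, α) = (R M x + (α/2) e₁, α)` (given here by its entrywise formula: the first
component of `T (x, α)` is `x 0 / 2 + α / 2` at index `1` and `x (j - 1)` at any other
index `j`), and let `S` be the operator given entrywise by the formula
`S (x, α) = (M⁻¹ L x - α e₀, α)` (first component `2 * x 1 - α` at index `0` and
`x (j + 1)` at any other index `j`). Then `T` is positive (maps elements of the form
`star b * b` to elements of that form), unital, satisfies `‖T ^ n‖ ≤ 1` for all `n ≥ 0`,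
and is bijective with inverse `S`. -/
theorem stmt_11
    (T S : (lp (fun _ : ℤ => ℂ) ∞ × ℂ) →L[ℂ] (lp (fun _ : ℤ => ℂ) ∞ × ℂ))
    (hT : ∀ (x : lp (fun _ : ℤ => ℂ) ∞) (α : ℂ) (j : ℤ),
      (T (x, α)).1 j = if j = 1 then x 0 / 2 + α / 2 else x (j - 1))
    (hT' : ∀ (x : lp (fun _ : ℤ => ℂ) ∞) (α : ℂ), (T (x, α)).2 = α)
    (hS : ∀ (x : lp (fun _ : ℤ => ℂ) ∞) (α : ℂ) (j : ℤ),
      (S (x, α)).1 j = if j = 0 then 2 * x 1 - α else x (j + 1))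
    (hS' : ∀ (x : lp (fun _ : ℤ => ℂ) ∞) (α : ℂ), (S (x, α)).2 = α) :
    (∀ a : lp (fun _ : ℤ => ℂ) ∞ × ℂ, (∃ b, a = star b * b) → ∃ c, T a = star c * c) ∧
    T 1 = 1 ∧
    (∀ n : ℕ, ‖T ^ n‖ ≤ 1) ∧
    Function.Bijective T ∧
    (∀ a, T (S a) = a) ∧ (∀ a, S (T a) = a) := by
  -- inverse identities
  have hTS : ∀ a, T (S a) = a := by
    rintro ⟨x, α⟩
    have h2 : S (x, α) = ((S (x, α)).1, α) := Prod.ext rfl (hS' x α)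
    rw [h2]
    refine Prod.ext ?_ (hT' _ _)
    apply lp.ext; funext j
    rw [hT]
    by_cases hj : j = 1
    · subst hj
      rw [if_pos rfl, hS x α 0, if_pos rfl]
      ring
    · rw [if_neg hj, hS x α (j - 1), if_neg (show ¬(j - 1 = 0) by omega)]
      have hjj : j - 1 + 1 = j := by omega
      rw [hjj]
  have hST : ∀ a, S (T a) = a := by
    rintro ⟨x, α⟩
    have h2 : T (x, α) = ((T (x, α)).1, α) := Prod.ext rfl (hT' x α)
    rw [h2]
    refine Prod.ext ?_ (hS' _ _)
    apply lp.ext; funext j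
    rw [hS]
    by_cases hj : j = 0
    · subst hj
      rw [if_pos rfl, hT x α 1, if_pos rfl]
      ring
    · rw [if_neg hj, hT x α (j + 1), if_neg (show ¬(j + 1 = 1) by omega)]
      have hjj : j + 1 - 1 = j := by omega
      rw [hjj]
  -- positivity
  have hpos : ∀ a : lp (fun _ : ℤ => ℂ) ∞ × ℂ,
      (∃ b, a = star b * b) → ∃ c, T a = star c * c := by
    rintro a ⟨⟨y, β⟩, rfl⟩
    have ha : (star ((y : lp (fun _ : ℤ => ℂ) ∞), β) * (y, β))
        = ((star y * y : lp (fun _ : ℤ => ℂ) ∞), star β * β) := rfl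
    set s : ℝ := (Complex.normSq (y 0) + Complex.normSq β) / 2 with hs
    have hs0 : 0 ≤ s := by
      have h1 := Complex.normSq_nonneg (y 0)
      have h2 := Complex.normSq_nonneg β
      rw [hs]; linarith
    set v : ℤ → ℂ := fun j => if j = 1 then (Real.sqrt s : ℂ) else y (j - 1) with hv
    have hvmem : Memℓp v ∞ := by
      apply memℓp_infty
      refine ⟨max ‖y‖ (Real.sqrt s), ?_⟩
      rintro r ⟨j, rfl⟩
      by_cases hj : j = 1
      · simp only [hv, hj, if_pos rfl]
        rw [Complex.norm_real, Real.norm_eq_abs, abs_of_nonneg (Real.sqrt_nonneg _)]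
        exact le_max_right _ _
      · simp only [hv, if_neg hj]
        exact le_trans (lp.norm_apply_le_norm ENNReal.top_ne_zero y (j - 1)) (le_max_left _ _)
    refine ⟨((⟨v, hvmem⟩ : lp (fun _ : ℤ => ℂ) ∞), β), ?_⟩
    rw [ha]
    refine Prod.ext ?_ ?_
    · apply lp.ext; funext j
      have hrhs : ((star ((⟨v, hvmem⟩ : lp (fun _ : ℤ => ℂ) ∞), β)
          * ((⟨v, hvmem⟩ : lp (fun _ : ℤ => ℂ) ∞), β)).1 : ℤ → ℂ) j
          = star (v j) * v j := rfl
      rw [hrhs, hT]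
      have hcm : ∀ i : ℤ, ((star y * y : lp (fun _ : ℤ => ℂ) ∞) : ℤ → ℂ) i
          = star (y i) * y i := fun i => rfl
      by_cases hj : j = 1
      · subst hj
        rw [if_pos rfl, hcm 0]
        simp only [hv, if_pos rfl]
        rw [RCLike.star_def, Complex.conj_ofReal, ← Complex.ofReal_mul,
          Real.mul_self_sqrt hs0, hs]
        rw [Complex.ofReal_div, Complex.ofReal_add,
          Complex.normSq_eq_conj_mul_self, Complex.normSq_eq_conj_mul_self]
        push_cast
        ring
      · rw [if_neg hj, hcm (j - 1)]
        simp only [hv, if_neg hj]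
    · rw [hT']
      rfl
  -- unital
  have hone : T 1 = 1 := by
    have h1 : (1 : lp (fun _ : ℤ => ℂ) ∞ × ℂ) = ((1 : lp (fun _ : ℤ => ℂ) ∞), (1 : ℂ)) := rfl
    rw [h1]
    refine Prod.ext ?_ (hT' _ _)
    apply lp.ext; funext j
    rw [hT]
    have hco : ∀ i : ℤ, ((1 : lp (fun _ : ℤ => ℂ) ∞) : ℤ → ℂ) i = 1 := by
      intro i; rw [lp.infty_coeFn_one]; rfl
    by_cases hj : j = 1
    · subst hj; rw [if_pos rfl, hco 0, hco 1]; norm_num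
    · rw [if_neg hj, hco (j - 1), hco j]
  -- norm bound
  have hTn : ‖T‖ ≤ 1 := by
    refine T.opNorm_le_bound zero_le_one ?_
    rintro ⟨x, α⟩
    rw [one_mul]
    have hx2 : T (x, α) = ((T (x, α)).1, α) := Prod.ext rfl (hT' x α)
    rw [hx2, Prod.norm_def, Prod.norm_def]
    have hb : ‖(T (x, α)).1‖ ≤ max ‖x‖ ‖α‖ := by
      refine lp.norm_le_of_forall_le (le_trans (norm_nonneg x) (le_max_left _ _)) ?_
      intro j
      rw [hT]
      by_cases hj : j = 1
      · subst hj; rw [if_pos rfl]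
        calc ‖x 0 / 2 + α / 2‖ ≤ ‖x 0 / 2‖ + ‖α / 2‖ := norm_add_le _ _
          _ = ‖x 0‖ / 2 + ‖α‖ / 2 := by simp [norm_div]
          _ ≤ (max ‖x‖ ‖α‖) / 2 + (max ‖x‖ ‖α‖) / 2 := by
              gcongr
              · exact le_trans (lp.norm_apply_le_norm ENNReal.top_ne_zero x 0) (le_max_left _ _)
              · exact le_max_right _ _
          _ = max ‖x‖ ‖α‖ := by ring
      · rw [if_neg hj]
        exact le_trans (lp.norm_apply_le_norm ENNReal.top_ne_zero x (j - 1)) (le_max_left _ _)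
    simp only [max_le_iff]
    exact ⟨hb, le_max_right _ _⟩
  have hpow : ∀ n : ℕ, ‖T ^ n‖ ≤ 1 := by
    intro n
    induction n with
    | zero => simp only [pow_zero]; exact ContinuousLinearMap.norm_id_le
    | succ n ih =>
      rw [pow_succ]
      refine le_trans (norm_mul_le _ _) ?_
      calc ‖T ^ n‖ * ‖T‖ ≤ 1 * 1 := mul_le_mul ih hTn (norm_nonneg _) zero_le_one
        _ = 1 := one_mul 1
  exact ⟨hpos, hone, hpow, ⟨Function.LeftInverse.injective hST,
    Function.RightInverse.surjective hTS⟩, hTS, hST⟩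
end

section
/- Let T be the operator on A = ℓ^∞(ℤ) × ℂ defined by T(x, α) = (RMx + (α/2)·e₁, α), where R is the right shift, M is the multiplication operator halving the entry at index 0, and e₁ is the unit vector at index 1. Then the inverse operator T⁻¹ is not positive: T⁻¹ maps the positive element (0, 1) to (−e₀, 1), which is not positive (here e₀ is the unit vector at index 0). -/
open scoped ENNReal

/-- Let `T` be the operator `T (x, α) = (R M x + (α/2) e₁, α)` on `A = ℓ^∞(ℤ) × ℂ` (given
by its entrywise formula) and let `S` be its inverse. Then `(0, 1)` is positive, its image
`S (0, 1)` equals `(-e₀, 1)` (entrywise: value `-1` at index `0`, value `0` elsewhere, and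
second component `1`) which is not positive; hence the inverse `S = T⁻¹` is not a positive
operator. -/
theorem stmt_12
    (T S : (lp (fun _ : ℤ => ℂ) ∞ × ℂ) →L[ℂ] (lp (fun _ : ℤ => ℂ) ∞ × ℂ))
    (hT : ∀ (x : lp (fun _ : ℤ => ℂ) ∞) (α : ℂ) (j : ℤ),
      (T (x, α)).1 j = if j = 1 then x 0 / 2 + α / 2 else x (j - 1))
    (hT' : ∀ (x : lp (fun _ : ℤ => ℂ) ∞) (α : ℂ), (T (x, α)).2 = α)
    (hTS : ∀ a, T (S a) = a) (hST : ∀ a, S (T a) = a) :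
    (∃ b : lp (fun _ : ℤ => ℂ) ∞ × ℂ, ((0, 1) : lp (fun _ : ℤ => ℂ) ∞ × ℂ) = star b * b) ∧
    (∀ j : ℤ, (S (0, 1)).1 j = if j = 0 then -1 else 0) ∧
    (S (0, 1)).2 = 1 ∧
    ¬ (∃ c : lp (fun _ : ℤ => ℂ) ∞ × ℂ, S (0, 1) = star c * c) ∧
    ¬ (∀ a : lp (fun _ : ℤ => ℂ) ∞ × ℂ, (∃ b, a = star b * b) → ∃ c, S a = star c * c) := by
  set a := S (0, 1) with ha
  have hTa : T a = (0, 1) := hTS _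
  have hTa1 : ∀ j : ℤ, (T a).1 j = if j = 1 then a.1 0 / 2 + a.2 / 2 else a.1 (j - 1) := by
    intro j
    have := hT a.1 a.2 j
    rwa [Prod.mk.eta] at this
  have hTa2 : (T a).2 = a.2 := by
    have := hT' a.1 a.2
    rwa [Prod.mk.eta] at this
  have ha2 : a.2 = 1 := by rw [← hTa2, hTa]
  have hzero : ∀ j : ℤ, (T a).1 j = 0 := by
    intro j
    rw [hTa]
    exact congrFun (lp.coeFn_zero (fun _ : ℤ => ℂ) ∞) j
  have ha0 : a.1 0 = -1 := by
    have h := hTa1 1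
    rw [hzero 1, if_pos rfl, ha2] at h
    have : a.1 0 / 2 + 1 / 2 = 0 := h.symm
    field_simp at this
    linear_combination this
  have hane : ∀ j : ℤ, j ≠ 0 → a.1 j = 0 := by
    intro j hj
    have h := hTa1 (j + 1)
    rw [hzero (j + 1), if_neg (by omega)] at h
    simpa using h.symm
  have hentry : ∀ j : ℤ, a.1 j = if j = 0 then -1 else 0 := by
    intro j
    by_cases hj : j = 0
    · simp [hj, ha0]
    · simp [hj, hane j hj]
  refine ⟨⟨(0, 1), ?_⟩, hentry, ha2, ?_, ?_⟩
  · ext <;> simp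
  · rintro ⟨c, hc⟩
    have h1 : a.1 = star c.1 * c.1 := by rw [hc, Prod.fst_mul, Prod.fst_star]
    have h0 : a.1 0 = (starRingEnd ℂ) (c.1 0) * c.1 0 := by
      rw [h1]
      have := congrFun (lp.infty_coeFn_mul (star c.1) c.1) 0
      rw [this]
      simp [lp.coeFn_star]
    rw [ha0] at h0
    have := Complex.normSq_eq_conj_mul_self (z := c.1 0)
    rw [← this] at h0
    have : (Complex.normSq (c.1 0) : ℂ).re = (-1 : ℂ).re := by rw [h0]
    simp at this
    nlinarith [Complex.normSq_nonneg (c.1 0), this]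
  · intro hpos
    rcases hpos (0, 1) ⟨(0, 1), by ext <;> simp⟩ with ⟨c, hc⟩
    have h1 : a.1 = star c.1 * c.1 := by rw [← ha] at hc; rw [hc, Prod.fst_mul, Prod.fst_star]
    have h0 : a.1 0 = (starRingEnd ℂ) (c.1 0) * c.1 0 := by
      rw [h1]
      have := congrFun (lp.infty_coeFn_mul (star c.1) c.1) 0
      rw [this]
      simp [lp.coeFn_star]
    rw [ha0] at h0
    rw [← Complex.normSq_eq_conj_mul_self (z := c.1 0)] at h0
    have : (Complex.normSq (c.1 0) : ℂ).re = (-1 : ℂ).re := by rw [h0]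
    simp at this
    nlinarith [Complex.normSq_nonneg (c.1 0), this]
end

section
/- Let T be the operator on A = ℓ^∞(ℤ) × ℂ defined by T(x, α) = (RMx + (α/2)·e₁, α), where R is the right shift, M is the multiplication operator halving the entry at index 0, and e₁ is the unit vector at index 1. Then ‖T⁻ⁿ‖ ≤ 3 for every integer n ≥ 1; together with ‖Tⁿ‖ ≤ 1 for n ≥ 0, the operator T is doubly power bounded, and consequently the spectrum of T is contained in the unit circle 𝕋 = {λ ∈ ℂ : |λ| = 1}. -/
open scoped ENNReal

set_option maxHeartbeats 1000000
set_option synthInstance.maxHeartbeats 200000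

/-- Let `T` be the operator `T (x, α) = (R M x + (α/2) e₁, α)` on `A = ℓ^∞(ℤ) × ℂ` (given
by its entrywise formula) with inverse `S` (given by its entrywise formula). Then
`‖S ^ n‖ = ‖T⁻ⁿ‖ ≤ 3` for `n ≥ 1`, `‖T ^ n‖ ≤ 1` for `n ≥ 0`; hence `T` is doubly power
bounded (bijective with `sup_{n ∈ ℤ} ‖Tⁿ‖ < ∞`) and consequently its spectrum is contained
in the unit circle. -/
theorem stmt_13
    (T S : (lp (fun _ : ℤ => ℂ) ∞ × ℂ) →L[ℂ] (lp (fun _ : ℤ => ℂ) ∞ × ℂ))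
    (hT : ∀ (x : lp (fun _ : ℤ => ℂ) ∞) (α : ℂ) (j : ℤ),
      (T (x, α)).1 j = if j = 1 then x 0 / 2 + α / 2 else x (j - 1))
    (hT' : ∀ (x : lp (fun _ : ℤ => ℂ) ∞) (α : ℂ), (T (x, α)).2 = α)
    (hS : ∀ (x : lp (fun _ : ℤ => ℂ) ∞) (α : ℂ) (j : ℤ),
      (S (x, α)).1 j = if j = 0 then 2 * x 1 - α else x (j + 1))
    (hS' : ∀ (x : lp (fun _ : ℤ => ℂ) ∞) (α : ℂ), (S (x, α)).2 = α)
    (hTS : ∀ a, T (S a) = a) (hST : ∀ a, S (T a) = a) :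
    (∀ n : ℕ, 1 ≤ n → ‖S ^ n‖ ≤ 3) ∧
    (∀ n : ℕ, ‖T ^ n‖ ≤ 1) ∧
    Function.Bijective T ∧
    (∃ C : ℝ, ∀ n : ℕ, ‖T ^ n‖ ≤ C ∧ ‖S ^ n‖ ≤ C) ∧
    spectrum ℂ T ⊆ {z : ℂ | ‖z‖ = 1} := by
  haveI : Nontrivial (lp (fun _ : ℤ => ℂ) ∞ × ℂ) :=
    ⟨(0, 0), (0, 1), fun h => one_ne_zero ((congrArg Prod.snd h).symm)⟩
  -- structure of powers of S
  have hSpow : ∀ (n : ℕ) (x : lp (fun _ : ℤ => ℂ) ∞) (α : ℂ),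
      ((S ^ n) (x, α)).2 = α ∧
      ∀ j : ℤ, (0 < j → ((S ^ n) (x, α)).1 j = x (j + n)) ∧
        (((S ^ n) (x, α)).1 j = x (j + n) ∨ ((S ^ n) (x, α)).1 j = 2 * x (j + n) - α) := by
    intro n
    induction n with
    | zero =>
      intro x α
      refine ⟨rfl, fun j => ?_⟩
      simp
    | succ n ih =>
      intro x α
      obtain ⟨ih2, ih1⟩ := ih x α
      set b := (S ^ n) (x, α) with hbdef
      have hpow : (S ^ (n + 1)) (x, α) = S b := by
        rw [pow_succ']; rfl
      have hbe : ((b.1, b.2) : lp (fun _ : ℤ => ℂ) ∞ × ℂ) = b := rfl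
      have hidx : ∀ j : ℤ, (j + 1) + (n : ℤ) = j + ((n : ℕ) + 1 : ℕ) := by
        intro j; push_cast; ring
      constructor
      · rw [hpow, ← hbe, hS']; exact ih2
      · intro j
        have hj1 : ((S ^ (n + 1)) (x, α)).1 j
            = if j = 0 then 2 * b.1 1 - b.2 else b.1 (j + 1) := by
          rw [hpow, ← hbe, hS]
        by_cases hj : j = 0
        · subst hj
          rw [hj1]
          simp only [if_pos rfl]
          rw [(ih1 1).1 one_pos, ih2]
          constructor
          · intro h; exact absurd h (lt_irrefl 0)
          · right
            congr 2
            push_cast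
            ring
        · rw [hj1, if_neg hj]
          constructor
          · intro h0
            have : (0 : ℤ) < j + 1 := by omega
            rw [(ih1 (j + 1)).1 this, hidx j]
          · rcases (ih1 (j + 1)).2 with h | h
            · left; rw [h, hidx j]
            · right; rw [h, hidx j]
  -- norm bound for powers of S
  have hSnorm : ∀ (n : ℕ) (a : lp (fun _ : ℤ => ℂ) ∞ × ℂ), ‖(S ^ n) a‖ ≤ 3 * ‖a‖ := by
    intro n a
    obtain ⟨x, α⟩ := a
    obtain ⟨h2, h1⟩ := hSpow n x α
    have hx : ‖x‖ ≤ ‖((x, α) : lp (fun _ : ℤ => ℂ) ∞ × ℂ)‖ := norm_fst_le (x, α)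
    have hα : ‖α‖ ≤ ‖((x, α) : lp (fun _ : ℤ => ℂ) ∞ × ℂ)‖ := norm_snd_le (x, α)
    rw [Prod.norm_def]
    apply max_le
    · apply lp.norm_le_of_forall_le (by positivity)
      intro j
      rcases (h1 j).2 with h | h
      · rw [h]
        calc ‖x (j + n)‖ ≤ ‖x‖ := lp.norm_apply_le_norm ENNReal.top_ne_zero x _
          _ ≤ 3 * ‖((x, α) : lp (fun _ : ℤ => ℂ) ∞ × ℂ)‖ := by nlinarith [norm_nonneg x]
      · rw [h]
        calc ‖2 * x (j + n) - α‖ ≤ ‖2 * x (j + n)‖ + ‖α‖ := norm_sub_le _ _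
          _ = 2 * ‖x (j + n)‖ + ‖α‖ := by rw [norm_mul]; norm_num
          _ ≤ 2 * ‖x‖ + ‖α‖ := by
              have := lp.norm_apply_le_norm ENNReal.top_ne_zero x (j + n)
              linarith
          _ ≤ 3 * ‖((x, α) : lp (fun _ : ℤ => ℂ) ∞ × ℂ)‖ := by linarith
    · rw [h2]
      linarith [norm_nonneg ((x, α) : lp (fun _ : ℤ => ℂ) ∞ × ℂ)]
  -- single-step norm bound for T
  have hTnorm1 : ∀ a : lp (fun _ : ℤ => ℂ) ∞ × ℂ, ‖T a‖ ≤ ‖a‖ := by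
    intro a
    obtain ⟨x, α⟩ := a
    have hx : ‖x‖ ≤ ‖((x, α) : lp (fun _ : ℤ => ℂ) ∞ × ℂ)‖ := norm_fst_le (x, α)
    have hα : ‖α‖ ≤ ‖((x, α) : lp (fun _ : ℤ => ℂ) ∞ × ℂ)‖ := norm_snd_le (x, α)
    rw [Prod.norm_def]
    apply max_le
    · apply lp.norm_le_of_forall_le (norm_nonneg _)
      intro j
      rw [hT]
      split_ifs with hj
      · calc ‖x 0 / 2 + α / 2‖ ≤ ‖x 0 / 2‖ + ‖α / 2‖ := norm_add_le _ _
          _ = ‖x 0‖ / 2 + ‖α‖ / 2 := by rw [norm_div, norm_div]; norm_num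
          _ ≤ ‖((x, α) : lp (fun _ : ℤ => ℂ) ∞ × ℂ)‖ := by
              have := lp.norm_apply_le_norm ENNReal.top_ne_zero x 0
              linarith
      · calc ‖x (j - 1)‖ ≤ ‖x‖ := lp.norm_apply_le_norm ENNReal.top_ne_zero x _
          _ ≤ _ := hx
    · rw [hT']; exact hα
  have hTnorm : ∀ (n : ℕ) (a : lp (fun _ : ℤ => ℂ) ∞ × ℂ), ‖(T ^ n) a‖ ≤ ‖a‖ := by
    intro n
    induction n with
    | zero => intro a; rw [pow_zero, ContinuousLinearMap.one_apply]
    | succ n ih =>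
      intro a
      have : ((T ^ (n + 1)) a) = T ((T ^ n) a) := by rw [pow_succ']; rfl
      rw [this]
      exact le_trans (hTnorm1 _) (ih a)
  have hS3 : ∀ n : ℕ, ‖S ^ n‖ ≤ 3 :=
    fun n => ContinuousLinearMap.opNorm_le_bound _ (by norm_num) (hSnorm n)
  have hT1 : ∀ n : ℕ, ‖T ^ n‖ ≤ 1 :=
    fun n => ContinuousLinearMap.opNorm_le_bound _ (by norm_num) (by
      intro a; rw [one_mul]; exact hTnorm n a)
  -- T is a unit with inverse S
  have hmulTS : T * S = 1 := ContinuousLinearMap.ext fun a => by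
    rw [ContinuousLinearMap.mul_apply, hTS a, ContinuousLinearMap.one_apply]
  have hmulST : S * T = 1 := ContinuousLinearMap.ext fun a => by
    rw [ContinuousLinearMap.mul_apply, hST a, ContinuousLinearMap.one_apply]
  set u : ((lp (fun _ : ℤ => ℂ) ∞ × ℂ) →L[ℂ] (lp (fun _ : ℤ => ℂ) ∞ × ℂ))ˣ :=
    ⟨T, S, hmulTS, hmulST⟩ with hu
  have hbij : Function.Bijective T :=
    ⟨Function.LeftInverse.injective hST, Function.RightInverse.surjective hTS⟩
  refine ⟨fun n _ => hS3 n, hT1, hbij, ⟨3, fun n => ⟨le_trans (hT1 n) (by norm_num), hS3 n⟩⟩, ?_⟩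
  intro z hz
  have hzU : z ∈ spectrum ℂ (u : (lp (fun _ : ℤ => ℂ) ∞ × ℂ) →L[ℂ] (lp (fun _ : ℤ => ℂ) ∞ × ℂ)) := hz
  have hz0 : z ≠ 0 := by
    intro h
    rw [h, spectrum.zero_mem_iff] at hzU
    exact hzU u.isUnit
  -- upper bound
  have hle : ‖z‖ ≤ 1 := le_trans (spectrum.norm_le_norm_of_mem hz) (by simpa using hT1 1)
  -- lower bound
  set zu : ℂˣ := Units.mk0 z hz0 with hzu
  have hzinv : ((zu⁻¹ : ℂˣ) : ℂ) ∈ spectrum ℂ ((↑u⁻¹ : (lp (fun _ : ℤ => ℂ) ∞ × ℂ) →L[ℂ] (lp (fun _ : ℤ => ℂ) ∞ × ℂ))) :=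
    spectrum.inv_mem_iff.mp (by simpa [hzu] using hzU)
  have huinv : (↑u⁻¹ : (lp (fun _ : ℤ => ℂ) ∞ × ℂ) →L[ℂ] (lp (fun _ : ℤ => ℂ) ∞ × ℂ)) = S := rfl
  rw [huinv] at hzinv
  have hpowmem : ∀ n : ℕ, ((zu⁻¹ : ℂˣ) : ℂ) ^ n ∈ spectrum ℂ (S ^ n) := by
    intro n
    exact spectrum.pow_image_subset S n ⟨_, hzinv, rfl⟩
  have hinvle : ‖((zu⁻¹ : ℂˣ) : ℂ)‖ ≤ 1 := by
    by_contra h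
    push_neg at h
    obtain ⟨n, hn⟩ := pow_unbounded_of_one_lt (3 : ℝ) h
    have := le_trans (spectrum.norm_le_norm_of_mem (hpowmem n)) (hS3 n)
    rw [norm_pow] at this
    linarith
  have hzinv_norm : ‖z‖⁻¹ ≤ 1 := by
    have : ((zu⁻¹ : ℂˣ) : ℂ) = z⁻¹ := rfl
    rw [this, norm_inv] at hinvle
    exact hinvle
  have hge : 1 ≤ ‖z‖ := by
    have hz0' : 0 < ‖z‖ := norm_pos_iff.mpr hz0
    rw [inv_le_one_iff₀] at hzinv_norm
    rcases hzinv_norm with h | h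
    · linarith
    · exact h
  exact le_antisymm hle hge
end

section
/- Let T be the operator on A = ℓ^∞(ℤ) × ℂ defined by T(x, α) = (RMx + (α/2)·e₁, α), where R is the right shift, M is the multiplication operator halving the entry at index 0, and e₁ is the unit vector at index 1. Then every λ ∈ 𝕋 = {λ ∈ ℂ : |λ| = 1} is an eigenvalue of T. The fixed space ker(1 − T) is two-dimensional, spanned by the unit 𝟙 = (e, 1) and by (x, 0) where x(j) = 2 for j ≤ 0 and x(j) = 1 for j ≥ 1. For every λ ∈ 𝕋 with λ ≠ 1, the eigenspace ker(λ − T) is one-dimensional, spanned by (x, 0) where x(j) = 2λ^{−j} for j ≤ 0 and x(j) = λ^{−j} for j ≥ 1. -/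
open scoped ENNReal

private lemma aux_down (x : ℤ → ℂ) (l : ℂ) (hl : l ≠ 0)
    (h : ∀ j : ℤ, j ≤ 0 → x (j - 1) = l * x j) :
    ∀ j : ℤ, j ≤ 0 → x j = l ^ (-j) * x 0 := by
  refine Int.le_induction_down ?_ ?_
  · simp
  · intro n hn ih
    rw [h n hn, ih, show -(n - 1) = 1 + -n by ring, zpow_add₀ hl, zpow_one]
    ring

private lemma aux_up (x : ℤ → ℂ) (l : ℂ) (hl : l ≠ 0)
    (h : ∀ j : ℤ, 2 ≤ j → x (j - 1) = l * x j) :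
    ∀ j : ℤ, 1 ≤ j → x j = l ^ (1 - j) * x 1 := by
  refine Int.le_induction ?_ ?_
  · simp
  · intro n hn ih
    have h2' : x n = l * x (n + 1) := by simpa using h (n + 1) (by omega)
    rw [ih] at h2'
    refine mul_left_cancel₀ hl ?_
    rw [← h2', show (1 : ℤ) - (n + 1) = -n by ring,
      show (1 : ℤ) - n = 1 + -n by ring, zpow_add₀ hl, zpow_one]
    ring

private lemma aux_mem (l : ℂ) (hl : ‖l‖ = 1) :
    Memℓp (fun j : ℤ => if j ≤ 0 then 2 * l ^ (-j) else l ^ (-j)) ∞ := by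
  have hl0 : l ≠ 0 := by intro h; simp [h] at hl
  apply memℓp_infty
  refine ⟨2, ?_⟩
  rintro r ⟨j, rfl⟩
  have hz : ‖l ^ (-j)‖ = 1 := by rw [norm_zpow, hl, one_zpow]
  show ‖if j ≤ 0 then 2 * l ^ (-j) else l ^ (-j)‖ ≤ 2
  by_cases hj : j ≤ 0
  · rw [if_pos hj, norm_mul, hz]
    norm_num
  · rw [if_neg hj, hz]
    norm_num

/-- Let `T` be the operator `T (x, α) = (R M x + (α/2) e₁, α)` on `A = ℓ^∞(ℤ) × ℂ` (given
by its entrywise formula). Then every unimodular `λ` is an eigenvalue of `T`; the fixed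
space `ker (1 - T)` is spanned by the unit `𝟙 = (e, 1)` and the vector `(x, 0)` with
`x j = 2` for `j ≤ 0` and `x j = 1` for `j ≥ 1` (so it is two-dimensional); and for every
unimodular `λ ≠ 1` the eigenspace `ker (λ - T)` is spanned by the single vector `(x, 0)`
with `x j = 2 λ^(-j)` for `j ≤ 0` and `x j = λ^(-j)` for `j ≥ 1` (so it is
one-dimensional). -/
theorem stmt_14
    (T : (lp (fun _ : ℤ => ℂ) ∞ × ℂ) →L[ℂ] (lp (fun _ : ℤ => ℂ) ∞ × ℂ))
    (hT : ∀ (x : lp (fun _ : ℤ => ℂ) ∞) (α : ℂ) (j : ℤ),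
      (T (x, α)).1 j = if j = 1 then x 0 / 2 + α / 2 else x (j - 1))
    (hT' : ∀ (x : lp (fun _ : ℤ => ℂ) ∞) (α : ℂ), (T (x, α)).2 = α) :
    (∀ l : ℂ, ‖l‖ = 1 → ∃ u : lp (fun _ : ℤ => ℂ) ∞ × ℂ, u ≠ 0 ∧ T u = l • u) ∧
    (∀ u : lp (fun _ : ℤ => ℂ) ∞ × ℂ,
      T u = u ↔ ∃ c d : ℂ, u.2 = c ∧
        ∀ j : ℤ, u.1 j = c + d * (if j ≤ 0 then 2 else 1)) ∧
    (∀ l : ℂ, ‖l‖ = 1 → l ≠ 1 → ∀ u : lp (fun _ : ℤ => ℂ) ∞ × ℂ,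
      T u = l • u ↔ ∃ d : ℂ, u.2 = 0 ∧
        ∀ j : ℤ, u.1 j = d * (if j ≤ 0 then 2 * l ^ (-j) else l ^ (-j))) := by
  -- entrywise characterization of `T u = l • u`
  have key : ∀ (l : ℂ) (u : lp (fun _ : ℤ => ℂ) ∞ × ℂ),
      T u = l • u ↔ (u.2 = l * u.2 ∧
        ∀ j : ℤ, (if j = 1 then u.1 0 / 2 + u.2 / 2 else u.1 (j - 1)) = l * u.1 j) := by
    intro l u
    obtain ⟨x, α⟩ := u
    constructor
    · intro h
      constructor
      · have := congrArg Prod.snd h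
        simpa [hT'] using this
      · intro j
        have := congrArg (fun v => (Prod.fst v : lp (fun _ : ℤ => ℂ) ∞) j) h
        simpa [hT, lp.coeFn_smul, Pi.smul_apply, smul_eq_mul] using this
    · rintro ⟨h2, h1⟩
      apply Prod.ext
      · apply lp.ext
        funext j
        have := h1 j
        simp only [lp.coeFn_smul, Pi.smul_apply, smul_eq_mul, Prod.smul_fst]
        rw [hT]
        simpa using this
      · simpa [hT'] using h2
  have part2 : ∀ u : lp (fun _ : ℤ => ℂ) ∞ × ℂ,
      T u = u ↔ ∃ c d : ℂ, u.2 = c ∧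
        ∀ j : ℤ, u.1 j = c + d * (if j ≤ 0 then 2 else 1) := by
    intro u
    have hk := key 1 u
    rw [one_smul] at hk
    rw [hk]
    constructor
    · rintro ⟨-, h1⟩
      refine ⟨u.2, u.1 1 - u.2, rfl, ?_⟩
      have hdn : ∀ j : ℤ, j ≤ 0 → u.1 j = u.1 0 := by
        have := aux_down (fun j => u.1 j) 1 one_ne_zero (fun j hj => by
          have := h1 j; simp only [show j ≠ 1 by omega, if_neg, one_mul] at this
          simpa using this)
        intro j hj; simpa using this j hj
      have hup : ∀ j : ℤ, 1 ≤ j → u.1 j = u.1 1 := by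
        have := aux_up (fun j => u.1 j) 1 one_ne_zero (fun j hj => by
          have := h1 j; simp only [show j ≠ 1 by omega, if_neg, one_mul] at this
          simpa using this)
        intro j hj; simpa using this j hj
      have he : u.1 0 / 2 + u.2 / 2 = u.1 1 := by
        have := h1 1; simpa using this
      intro j
      by_cases hj : j ≤ 0
      · rw [if_pos hj, hdn j hj]
        have : u.1 0 = 2 * u.1 1 - u.2 := by linear_combination 2 * he
        rw [this]; ring
      · rw [if_neg hj, hup j (by omega)]; ring
    · rintro ⟨c, d, hc, hx⟩
      refine ⟨by rw [one_mul], fun j => ?_⟩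
      rw [one_mul]
      by_cases hj1 : j = 1
      · subst hj1
        rw [if_pos rfl, hx 0, hx 1, hc]
        norm_num; ring
      · rw [if_neg hj1, hx (j - 1), hx j]
        by_cases hj : j ≤ 0
        · rw [if_pos hj, if_pos (by omega)]
        · rw [if_neg hj, if_neg (by omega)]
  have part3 : ∀ l : ℂ, ‖l‖ = 1 → l ≠ 1 → ∀ u : lp (fun _ : ℤ => ℂ) ∞ × ℂ,
      T u = l • u ↔ ∃ d : ℂ, u.2 = 0 ∧
        ∀ j : ℤ, u.1 j = d * (if j ≤ 0 then 2 * l ^ (-j) else l ^ (-j)) := by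
    intro l hl hl1 u
    have hl0 : l ≠ 0 := by intro h; simp [h] at hl
    rw [key]
    constructor
    · rintro ⟨h2, h1⟩
      have hα : u.2 = 0 := by
        have : (1 - l) * u.2 = 0 := by linear_combination h2
        rcases mul_eq_zero.mp this with h | h
        · exact absurd (by linear_combination -h) hl1
        · exact h
      refine ⟨u.1 0 / 2, hα, ?_⟩
      have hdn : ∀ j : ℤ, j ≤ 0 → u.1 j = l ^ (-j) * u.1 0 := by
        have := aux_down (fun j => u.1 j) l hl0 (fun j hj => by
          have := h1 j; simp only [show j ≠ 1 by omega, if_neg] at this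
          simpa using this)
        intro j hj; simpa using this j hj
      have hup : ∀ j : ℤ, 1 ≤ j → u.1 j = l ^ (1 - j) * u.1 1 := by
        have := aux_up (fun j => u.1 j) l hl0 (fun j hj => by
          have := h1 j; simp only [show j ≠ 1 by omega, if_neg] at this
          simpa using this)
        intro j hj; simpa using this j hj
      have he : u.1 0 / 2 = l * u.1 1 := by
        have := h1 1; rw [if_pos rfl, hα] at this; simpa using this
      intro j
      by_cases hj : j ≤ 0
      · rw [if_pos hj, hdn j hj]; ring
      · rw [if_neg hj, hup j (by omega),
          show (1 : ℤ) - j = 1 + -j by ring, zpow_add₀ hl0, zpow_one]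
        linear_combination (-(l ^ (-j))) * he
    · rintro ⟨d, hα, hx⟩
      refine ⟨by rw [hα, mul_zero], fun j => ?_⟩
      by_cases hj1 : j = 1
      · subst hj1
        rw [if_pos rfl, hx 0, hx 1, hα, if_pos (le_refl (0:ℤ)), if_neg (by omega : ¬ (1:ℤ) ≤ 0)]
        rw [neg_zero, zpow_zero, zpow_neg_one]
        field_simp
        ring
      · rw [if_neg hj1, hx (j - 1), hx j]
        by_cases hj : j ≤ 0
        · rw [if_pos hj, if_pos (by omega : j - 1 ≤ 0),
            show -(j-1) = -j + 1 by ring, zpow_add₀ hl0, zpow_one]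
          ring
        · rw [if_neg hj, if_neg (by omega : ¬ j - 1 ≤ 0),
            show -(j-1) = -j + 1 by ring, zpow_add₀ hl0, zpow_one]
          ring
  refine ⟨?_, part2, part3⟩
  intro l hl
  have hl0 : l ≠ 0 := by intro h; simp [h] at hl
  set X : lp (fun _ : ℤ => ℂ) ∞ :=
    ⟨(fun j : ℤ => if j ≤ 0 then 2 * l ^ (-j) else l ^ (-j)), aux_mem l hl⟩ with hX
  have hXapp : ∀ j : ℤ, X j = if j ≤ 0 then 2 * l ^ (-j) else l ^ (-j) := fun j => rfl
  refine ⟨(X, 0), ?_, ?_⟩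
  · intro h
    have hX0 : X = 0 := congrArg Prod.fst h
    have h0 : (X : ℤ → ℂ) 0 = 0 := by rw [hX0]; simp
    rw [hXapp] at h0
    simp at h0
  · by_cases hl1 : l = 1
    · subst hl1
      rw [one_smul]
      rw [part2 (X, 0)]
      exact ⟨0, 1, rfl, fun j => by
        rw [hXapp]; by_cases hj : j ≤ 0 <;> simp [hj]⟩
    · rw [part3 l hl hl1 (X, 0)]
      exact ⟨1, rfl, fun j => by rw [hXapp, one_mul]⟩
end

section
/- Let H be a complex Hilbert space and let a be a positive compact bounded linear operator on H. Then the order interval [0, a] = {c : H → H bounded linear, c compact, 0 ≤ c ≤ a} is compact with respect to the operator norm. -/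
open ContinuousLinearMap Metric Set

section Aux

variable {H : Type*} [NormedAddCommGroup H] [InnerProductSpace ℂ H] [CompleteSpace H]

local notation "⟪" x ", " y "⟫" => @inner ℂ _ _ x y

/-- Cauchy–Schwarz inequality for a positive operator. -/
theorem aux_cs_pos (c : H →L[ℂ] H) (hc : c.IsPositive) (ζ : H) :
    ‖c ζ‖ ^ 2 ≤ ‖c‖ * Complex.re ⟪c ζ, ζ⟫ := by
  rcases eq_or_ne (c ζ) 0 with h0 | h0
  · simp only [h0, norm_zero]
    simpa using mul_nonneg (norm_nonneg c) (hc.2 ζ)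
  have hcne : c ≠ 0 := fun h => h0 (by simp [h])
  have hc0 : (0:ℝ) < ‖c‖ := norm_pos_iff.mpr hcne
  set t : ℝ := ‖c‖⁻¹ with ht
  have h := hc.2 (ζ - (t:ℂ) • c ζ)
  rw [reApplyInnerSelf_apply] at h
  have hsa : ∀ u v : H, ⟪c u, v⟫ = ⟪u, c v⟫ := fun u v => by
    conv_lhs => rw [← hc.isSelfAdjoint.adjoint_eq]
    exact adjoint_inner_left c v u
  have e1 : ⟪c (c ζ), ζ⟫ = (‖c ζ‖ ^ 2 : ℝ) := by
    rw [hsa (c ζ) ζ]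
    exact_mod_cast inner_self_eq_norm_sq_to_K (c ζ)
  have e2 : ⟪c ζ, c ζ⟫ = (‖c ζ‖ ^ 2 : ℝ) := by
    exact_mod_cast inner_self_eq_norm_sq_to_K (c ζ)
  simp only [map_sub, map_smul, inner_sub_left, inner_sub_right, inner_smul_left,
    inner_smul_right, Complex.conj_ofReal, e1, e2] at h
  have e3 : Complex.re ⟪c (c ζ), c ζ⟫ ≤ ‖c‖ * ‖c ζ‖ ^ 2 := by
    calc Complex.re ⟪c (c ζ), c ζ⟫ ≤ ‖⟪c (c ζ), c ζ⟫‖ := Complex.re_le_norm _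
      _ ≤ ‖c (c ζ)‖ * ‖c ζ‖ := norm_inner_le_norm _ _
      _ ≤ (‖c‖ * ‖c ζ‖) * ‖c ζ‖ := by gcongr; exact c.le_opNorm _
      _ = ‖c‖ * ‖c ζ‖ ^ 2 := by ring
  have htc : t * ‖c‖ = 1 := inv_mul_cancel₀ (ne_of_gt hc0)
  simp only [RCLike.re_to_complex, Complex.sub_re, Complex.re_ofReal_mul, Complex.ofReal_re,
    Complex.ofReal_sub] at h
  have ht0 : (0:ℝ) < t := by positivity
  set A := (inner ℂ (c ζ) ζ : ℂ).re with hA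
  set B := ‖c ζ‖ ^ 2 with hB
  set R := (inner ℂ (c (c ζ)) (c ζ) : ℂ).re with hR
  have hexp : 0 ≤ A - 2*(t*B) + t*(t*R) := by
    have : t*(B - t*R) = t*B - t*(t*R) := by ring
    linarith [h, this]
  have h1 : t*(t*R) ≤ t*B := by
    have : t*(t*R) ≤ t*(t*(‖c‖*B)) := by gcongr
    calc t*(t*R) ≤ t*(t*(‖c‖*B)) := this
      _ = (t*‖c‖)*(t*B) := by ring
      _ = t*B := by rw [htc]; ring
  have h2 : t*B ≤ A := by linarith
  have h3 := mul_le_mul_of_nonneg_left h2 hc0.le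
  have h4 : ‖c‖*(t*B) = B := by
    calc ‖c‖*(t*B) = (t*‖c‖)*B := by ring
      _ = B := by rw [htc]; ring
  linarith

theorem aux_re_le (c a : H →L[ℂ] H) (hca : c ≤ a) (ζ : H) :
    Complex.re ⟪c ζ, ζ⟫ ≤ Complex.re ⟪a ζ, ζ⟫ := by
  have h := ((le_def c a).mp hca).2 ζ
  rw [reApplyInnerSelf_apply] at h
  simp only [sub_apply, inner_sub_left, RCLike.re_to_complex, Complex.sub_re] at h
  linarith

theorem aux_norm_le (c a : H →L[ℂ] H) (h0 : 0 ≤ c) (hca : c ≤ a) : ‖c‖ ≤ ‖a‖ := by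
  have hc : c.IsPositive := (nonneg_iff_isPositive c).mp h0
  have key : ∀ ζ : H, ‖c ζ‖ ^ 2 ≤ ‖c‖ * ‖a‖ * ‖ζ‖ ^ 2 := by
    intro ζ
    calc ‖c ζ‖ ^ 2 ≤ ‖c‖ * Complex.re ⟪c ζ, ζ⟫ := aux_cs_pos c hc ζ
      _ ≤ ‖c‖ * Complex.re ⟪a ζ, ζ⟫ := by
          apply mul_le_mul_of_nonneg_left _ (norm_nonneg _)
          exact aux_re_le c a hca ζ
      _ ≤ ‖c‖ * (‖a‖ * ‖ζ‖ ^ 2) := by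
          gcongr
          calc Complex.re ⟪a ζ, ζ⟫ ≤ ‖⟪a ζ, ζ⟫‖ := Complex.re_le_norm _
              _ ≤ ‖a ζ‖ * ‖ζ‖ := norm_inner_le_norm _ _
              _ ≤ (‖a‖ * ‖ζ‖) * ‖ζ‖ := by gcongr; exact a.le_opNorm ζ
              _ = ‖a‖ * ‖ζ‖ ^ 2 := by ring
      _ = ‖c‖ * ‖a‖ * ‖ζ‖ ^ 2 := by ring
  set s : ℝ := Real.sqrt (‖c‖ * ‖a‖) with hs
  have hcs : ‖c‖ ≤ s := by
    apply c.opNorm_le_bound (Real.sqrt_nonneg _)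
    intro ζ
    have h1 : ‖c ζ‖ ^ 2 ≤ (s * ‖ζ‖) ^ 2 := by
      rw [mul_pow, hs, Real.sq_sqrt (by positivity)]
      exact key ζ
    nlinarith [norm_nonneg (c ζ), mul_nonneg (Real.sqrt_nonneg (‖c‖ * ‖a‖)) (norm_nonneg ζ)]
  have hs2 : ‖c‖ ^ 2 ≤ ‖c‖ * ‖a‖ := by
    have := Real.sq_sqrt (show (0:ℝ) ≤ ‖c‖ * ‖a‖ by positivity)
    nlinarith [Real.sqrt_nonneg (‖c‖ * ‖a‖), norm_nonneg c]
  rcases eq_or_lt_of_le (norm_nonneg c) with h | h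
  · rw [← h]; exact norm_nonneg a
  · nlinarith

/-- Key domination estimate for `0 ≤ c ≤ a`. -/
theorem aux_dom (c a : H →L[ℂ] H) (h0 : 0 ≤ c) (hca : c ≤ a) (ζ : H) :
    ‖c ζ‖ ^ 2 ≤ ‖a‖ * (‖a ζ‖ * ‖ζ‖) := by
  have hc : c.IsPositive := (nonneg_iff_isPositive c).mp h0
  calc ‖c ζ‖ ^ 2 ≤ ‖c‖ * Complex.re ⟪c ζ, ζ⟫ := aux_cs_pos c hc ζ
    _ ≤ ‖a‖ * (‖a ζ‖ * ‖ζ‖) := by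
        have h1 : Complex.re ⟪c ζ, ζ⟫ ≤ ‖a ζ‖ * ‖ζ‖ := by
          calc Complex.re ⟪c ζ, ζ⟫ ≤ Complex.re ⟪a ζ, ζ⟫ := aux_re_le c a hca ζ
            _ ≤ ‖⟪a ζ, ζ⟫‖ := Complex.re_le_norm _
            _ ≤ ‖a ζ‖ * ‖ζ‖ := norm_inner_le_norm _ _
        have h2 : 0 ≤ Complex.re ⟪c ζ, ζ⟫ := hc.2 ζ
        have h3 := aux_norm_le c a h0 hca
        nlinarith [norm_nonneg c]

theorem aux_opNorm_le_of_unit (b : H →L[ℂ] H) {M : ℝ} (hM : 0 ≤ M)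
    (h : ∀ ξ : H, ‖ξ‖ ≤ 1 → ‖b ξ‖ ≤ M) : ‖b‖ ≤ M := by
  apply b.opNorm_le_bound hM
  intro x
  rcases eq_or_ne x 0 with rfl | hx
  · simp
  have hnx : 0 < ‖x‖ := norm_pos_iff.mpr hx
  have hu : ‖((‖x‖⁻¹ : ℝ) : ℂ) • x‖ ≤ 1 := by
    rw [norm_smul, Complex.norm_real, Real.norm_eq_abs, abs_of_nonneg (by positivity)]
    rw [inv_mul_cancel₀ hnx.ne']
  have h2 := h _ hu
  rw [map_smul, norm_smul, Complex.norm_real, Real.norm_eq_abs,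
    abs_of_nonneg (by positivity : (0:ℝ) ≤ ‖x‖⁻¹)] at h2
  calc ‖b x‖ = ‖x‖ * (‖x‖⁻¹ * ‖b x‖) := by field_simp
    _ ≤ ‖x‖ * M := by gcongr
    _ = M * ‖x‖ := mul_comm _ _

theorem aux_norm_apply_le_of_inner (b : H →L[ℂ] H) (ξ : H) {M : ℝ} (hM : 0 ≤ M)
    (h : ∀ ξ' : H, ‖ξ'‖ ≤ 1 → ‖⟪b ξ, ξ'⟫‖ ≤ M) : ‖b ξ‖ ≤ M := by
  rcases eq_or_ne (b ξ) 0 with h0 | h0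
  · simp [h0, hM]
  have hn : 0 < ‖b ξ‖ := norm_pos_iff.mpr h0
  have hu : ‖((‖b ξ‖⁻¹ : ℝ) : ℂ) • b ξ‖ ≤ 1 := by
    rw [norm_smul, Complex.norm_real, Real.norm_eq_abs, abs_of_nonneg (by positivity)]
    rw [inv_mul_cancel₀ hn.ne']
  have h2 := h _ hu
  rw [inner_smul_right, inner_self_eq_norm_sq_to_K, norm_mul, norm_pow, RCLike.norm_ofReal,
    Complex.norm_real, Real.norm_eq_abs, abs_of_nonneg (by positivity : (0:ℝ) ≤ ‖b ξ‖⁻¹),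
    abs_of_nonneg hn.le] at h2
  have heq : ‖b ξ‖⁻¹ * ‖b ξ‖ ^ 2 = ‖b ξ‖ := by
    field_simp [pow_two]
  rwa [heq] at h2

/-- Finite net of the image of the unit ball under a compact operator, with exact preimages. -/
theorem aux_net (a : H →L[ℂ] H) (ha : IsCompactOperator a) {δ : ℝ} (hδ : 0 < δ) :
    ∃ s : Set H, s.Finite ∧ (∀ η ∈ s, ‖η‖ ≤ 1) ∧
      ∀ ξ : H, ‖ξ‖ ≤ 1 → ∃ η ∈ s, ‖a ξ - a η‖ < δ := by
  have h1 : IsCompact (closure (a '' closedBall (0:H) 1)) :=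
    IsCompactOperator.isCompact_closure_image_closedBall (𝕜₁ := ℂ)
      (f := (a : H →ₗ[ℂ] H)) ha 1
  have h2 : TotallyBounded (a '' closedBall (0:H) 1) :=
    (h1.totallyBounded).subset subset_closure
  obtain ⟨t, hts, htf, hcov⟩ := totallyBounded_iff_subset.mp h2 _ (dist_mem_uniformity hδ)
  have hch : ∀ y ∈ t, ∃ x, ‖x‖ ≤ 1 ∧ a x = y := by
    intro y hy
    obtain ⟨x, hx, hxy⟩ := hts hy
    exact ⟨x, by simpa [mem_closedBall, dist_zero_right] using hx, hxy⟩
  choose! f hf1 hf2 using hch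
  refine ⟨f '' t, htf.image f, ?_, ?_⟩
  · rintro η ⟨y, hy, rfl⟩
    exact hf1 y hy
  · intro ξ hξ
    have hmem : a ξ ∈ a '' closedBall (0:H) 1 :=
      ⟨ξ, by simpa [mem_closedBall, dist_zero_right] using hξ, rfl⟩
    obtain ⟨y, hy, hxy⟩ := Set.mem_iUnion₂.mp (hcov hmem)
    refine ⟨f y, Set.mem_image_of_mem f hy, ?_⟩
    have : dist (a ξ) y < δ := hxy
    rw [← hf2 y hy] at this
    rwa [dist_eq_norm] at this

/-- Any operator `0 ≤ c ≤ a` below a compact operator is compact. -/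
theorem aux_cpt_of_le (c a : H →L[ℂ] H) (h0 : 0 ≤ c) (hca : c ≤ a)
    (ha : IsCompactOperator a) : IsCompactOperator c := by
  rw [show (⇑c : H → H) = ⇑(c : H →ₗ[ℂ] H) from rfl,
    isCompactOperator_iff_isCompact_closure_image_closedBall (𝕜₁ := ℂ)
      ((c : H →ₗ[ℂ] H)) one_pos]
  apply TotallyBounded.isCompact_of_isClosed ?_ isClosed_closure
  apply TotallyBounded.closure
  rw [Metric.totallyBounded_iff]
  intro ε hε
  set Mp : ℝ := ‖a‖ + 1 with hMp
  have hMp0 : (0:ℝ) < Mp := by positivity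
  set δ : ℝ := ε^2 / (8 * Mp) with hδdef
  have hδ : (0:ℝ) < δ := by positivity
  obtain ⟨s, hsfin, hs1, hsnet⟩ := aux_net a ha hδ
  refine ⟨c '' s, hsfin.image _, ?_⟩
  rintro x ⟨ξ, hξ, rfl⟩
  rw [mem_closedBall, dist_zero_right] at hξ
  obtain ⟨η, hη, hδ1⟩ := hsnet ξ hξ
  rw [Set.mem_iUnion₂]
  refine ⟨c η, Set.mem_image_of_mem c hη, ?_⟩
  rw [mem_ball, dist_eq_norm]
  show ‖c ξ - c η‖ < ε
  rw [← map_sub]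
  have hζn : ‖ξ - η‖ ≤ 2 := by
    calc ‖ξ - η‖ ≤ ‖ξ‖ + ‖η‖ := norm_sub_le _ _
      _ ≤ 1 + 1 := add_le_add hξ (hs1 η hη)
      _ = 2 := by norm_num
  have hdom := aux_dom c a h0 hca (ξ - η)
  have haζ : ‖a (ξ - η)‖ ≤ δ := by
    rw [map_sub]; exact hδ1.le
  have hbound : ‖c (ξ - η)‖ ^ 2 ≤ (ε/2)^2 := by
    calc ‖c (ξ - η)‖ ^ 2 ≤ ‖a‖ * (‖a (ξ - η)‖ * ‖ξ - η‖) := hdom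
      _ ≤ Mp * (δ * 2) := by
          gcongr
          all_goals first
            | exact le_add_of_nonneg_right zero_le_one
            | exact haζ
            | exact hζn
            | positivity
      _ = ε^2/4 := by rw [hδdef]; field_simp; ring
      _ = (ε/2)^2 := by ring
  have : ‖c (ξ - η)‖ ≤ ε/2 := by
    nlinarith [norm_nonneg (c (ξ - η)), hε.le]
  linarith

theorem aux_isClosed_pos : IsClosed {c : H →L[ℂ] H | c.IsPositive} := by
  have heq : {c : H →L[ℂ] H | c.IsPositive} =
      {c : H →L[ℂ] H | ContinuousLinearMap.adjoint c = c} ∩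
        ⋂ x : H, {c : H →L[ℂ] H | 0 ≤ Complex.re ⟪c x, x⟫} := by
    ext c
    simp only [Set.mem_setOf_eq, Set.mem_inter_iff, Set.mem_iInter]
    constructor
    · intro hc
      refine ⟨isSelfAdjoint_iff'.mp hc.isSelfAdjoint, fun x => ?_⟩
      simpa [reApplyInnerSelf_apply] using hc.2 x
    · intro ⟨h1, h2⟩
      refine ⟨ContinuousLinearMap.isSelfAdjoint_iff_isSymmetric.mp (isSelfAdjoint_iff'.mpr h1), fun x => ?_⟩
      simpa [reApplyInnerSelf_apply] using h2 x
  rw [heq]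
  apply IsClosed.inter
  · exact isClosed_eq (ContinuousLinearMap.adjoint (E := H) (F := H)).continuous continuous_id
  · apply isClosed_iInter
    intro x
    apply isClosed_le continuous_const
    exact (Complex.continuous_re).comp
      (Continuous.inner ((ContinuousLinearMap.apply ℂ H x).continuous) continuous_const)

theorem aux_isClosed_interval (a : H →L[ℂ] H) :
    IsClosed {c : H →L[ℂ] H | 0 ≤ c ∧ c ≤ a} := by
  have heq : {c : H →L[ℂ] H | 0 ≤ c ∧ c ≤ a} =
      {c : H →L[ℂ] H | c.IsPositive} ∩ (fun c : H →L[ℂ] H => a - c) ⁻¹'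
        {d : H →L[ℂ] H | d.IsPositive} := by
    ext c
    simp only [Set.mem_setOf_eq, Set.mem_inter_iff, Set.mem_preimage]
    rw [nonneg_iff_isPositive, le_def]
  rw [heq]
  exact aux_isClosed_pos.inter
    (aux_isClosed_pos.preimage (continuous_const.sub continuous_id))

end Aux

/-- For a positive compact operator `a` on a complex Hilbert space `H`, the order interval
`[0, a]` of compact operators (in the Loewner order) is compact in the operator norm. -/
theorem stmt_15 {H : Type*} [NormedAddCommGroup H] [InnerProductSpace ℂ H] [CompleteSpace H]
    (a : H →L[ℂ] H) (ha_cpt : IsCompactOperator a) (ha_pos : 0 ≤ a) :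
    IsCompact {c : H →L[ℂ] H | IsCompactOperator c ∧ 0 ≤ c ∧ c ≤ a} := by
  have hSeq : {c : H →L[ℂ] H | IsCompactOperator c ∧ 0 ≤ c ∧ c ≤ a} =
      {c : H →L[ℂ] H | 0 ≤ c ∧ c ≤ a} := by
    ext c
    simp only [Set.mem_setOf_eq]
    exact ⟨fun h => h.2, fun h => ⟨aux_cpt_of_le c a h.1 h.2 ha_cpt, h⟩⟩
  rw [hSeq]
  apply TotallyBounded.isCompact_of_isClosed ?_ (aux_isClosed_interval a)
  rw [Metric.totallyBounded_iff]
  intro ε hε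
  set S := {c : H →L[ℂ] H | 0 ≤ c ∧ c ≤ a} with hSdef
  set Mp : ℝ := ‖a‖ + 1 with hMp
  have hMp0 : (0:ℝ) < Mp := by positivity
  set δ : ℝ := ε^2 / (512 * Mp) with hδdef
  have hδ : (0:ℝ) < δ := by positivity
  obtain ⟨s, hsfin, hs1, hsnet⟩ := aux_net a ha_cpt hδ
  haveI : Fintype ↥s := hsfin.fintype
  set Φ : (H →L[ℂ] H) → (↥s × ↥s → ℂ) :=
    fun c p => @inner ℂ _ _ (c (p.1 : H)) ((p.2 : H)) with hΦdef
  -- the key uniform estimate for members of S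
  have hdom16 : ∀ c ∈ S, ∀ ζ : H, ‖ζ‖ ≤ 2 → ‖a ζ‖ ≤ δ → ‖c ζ‖ ≤ ε/16 := by
    rintro c ⟨hc0, hca⟩ ζ h1 h2
    have hd := aux_dom c a hc0 hca ζ
    have hb : ‖c ζ‖^2 ≤ (ε/16)^2 := by
      calc ‖c ζ‖^2 ≤ ‖a‖*(‖a ζ‖*‖ζ‖) := hd
        _ ≤ Mp*(δ*2) := by
            gcongr
            all_goals first
              | exact le_add_of_nonneg_right zero_le_one
              | exact h2
              | exact h1
              | positivity
        _ = ε^2/256 := by rw [hδdef]; field_simp; ring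
        _ = (ε/16)^2 := by ring
    nlinarith [norm_nonneg (c ζ), hε.le]
  have himg : Φ '' S ⊆ closedBall 0 ‖a‖ := by
    rintro _ ⟨c, hc, rfl⟩
    rw [mem_closedBall, dist_zero_right]
    refine (pi_norm_le_iff_of_nonneg (norm_nonneg a)).mpr fun p => ?_
    calc ‖@inner ℂ _ _ (c (p.1 : H)) ((p.2 : H))‖
        ≤ ‖c (p.1 : H)‖ * ‖(p.2 : H)‖ := norm_inner_le_norm _ _
      _ ≤ (‖c‖ * ‖(p.1 : H)‖) * ‖(p.2 : H)‖ := by gcongr; exact c.le_opNorm _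
      _ ≤ (‖a‖ * 1) * 1 :=
          mul_le_mul
            (mul_le_mul (aux_norm_le c a hc.1 hc.2) (hs1 _ p.1.2) (norm_nonneg _)
              (norm_nonneg a))
            (hs1 _ p.2.2) (norm_nonneg _) (by positivity)
      _ = ‖a‖ := by ring
  have htb2 : TotallyBounded (Φ '' S) :=
    ((isCompact_closedBall (0 : ↥s × ↥s → ℂ) ‖a‖).totallyBounded).subset himg
  obtain ⟨u, hus, huf, hucov⟩ := totallyBounded_iff_subset.mp htb2 _
    (dist_mem_uniformity (show (0:ℝ) < ε/4 by positivity))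
  choose! g hg1 hg2 using fun y (hy : y ∈ u) => hus hy
  refine ⟨g '' u, huf.image g, ?_⟩
  intro c hc
  obtain ⟨y, hy, hxy⟩ := Set.mem_iUnion₂.mp (hucov (Set.mem_image_of_mem Φ hc))
  have hdy : dist (Φ c) y < ε/4 := hxy
  set ck := g y with hck_def
  have hck : ck ∈ S := hg1 y hy
  have hΦck : Φ ck = y := hg2 y hy
  rw [Set.mem_iUnion₂]
  refine ⟨ck, Set.mem_image_of_mem g hy, ?_⟩
  rw [mem_ball, dist_eq_norm]
  set b := c - ck with hbdef
  have hb_sa : ∀ w v : H, @inner ℂ _ _ (b w) v = @inner ℂ _ _ w (b v) := by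
    have h1 := ((nonneg_iff_isPositive c).mp hc.1).isSelfAdjoint
    have h2 := ((nonneg_iff_isPositive ck).mp hck.1).isSelfAdjoint
    have h3 : IsSelfAdjoint b := h1.sub h2
    intro w v
    conv_lhs => rw [← h3.adjoint_eq]
    exact adjoint_inner_left b v w
  have key1 : ∀ ζ : H, ‖ζ‖ ≤ 2 → ‖a ζ‖ ≤ δ → ‖b ζ‖ ≤ ε/8 := by
    intro ζ h1 h2
    have hc1 := hdom16 c hc ζ h1 h2
    have hc2 := hdom16 ck hck ζ h1 h2
    calc ‖b ζ‖ = ‖c ζ - ck ζ‖ := by rw [hbdef]; rfl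
      _ ≤ ‖c ζ‖ + ‖ck ζ‖ := norm_sub_le _ _
      _ ≤ ε/16 + ε/16 := add_le_add hc1 hc2
      _ = ε/8 := by ring
  have key2 : ∀ ξ ξ' : H, ‖ξ‖ ≤ 1 → ‖ξ'‖ ≤ 1 →
      ‖@inner ℂ _ _ (b ξ) ξ'‖ ≤ ε/2 := by
    intro ξ ξ' hξ hξ'
    obtain ⟨η, hη, h1⟩ := hsnet ξ hξ
    obtain ⟨η', hη', h2⟩ := hsnet ξ' hξ'
    have hζ1 : ‖ξ - η‖ ≤ 2 := by
      calc ‖ξ - η‖ ≤ ‖ξ‖ + ‖η‖ := norm_sub_le _ _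
        _ ≤ 1 + 1 := add_le_add hξ (hs1 η hη)
        _ = 2 := by norm_num
    have hζ2 : ‖ξ' - η'‖ ≤ 2 := by
      calc ‖ξ' - η'‖ ≤ ‖ξ'‖ + ‖η'‖ := norm_sub_le _ _
        _ ≤ 1 + 1 := add_le_add hξ' (hs1 η' hη')
        _ = 2 := by norm_num
    have ha1 : ‖a (ξ - η)‖ ≤ δ := by rw [map_sub]; exact h1.le
    have ha2 : ‖a (ξ' - η')‖ ≤ δ := by rw [map_sub]; exact h2.le
    have hdecomp : @inner ℂ _ _ (b ξ) ξ' =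
        @inner ℂ _ _ (b (ξ - η)) ξ' + @inner ℂ _ _ (b η) (ξ' - η') +
          @inner ℂ _ _ (b η) η' := by
      simp only [map_sub, inner_sub_left, inner_sub_right]
      ring
    have e1 : ‖@inner ℂ _ _ (b (ξ - η)) ξ'‖ ≤ ε/8 := by
      calc ‖@inner ℂ _ _ (b (ξ - η)) ξ'‖ ≤ ‖b (ξ - η)‖ * ‖ξ'‖ := norm_inner_le_norm _ _
        _ ≤ (ε/8) * 1 :=
            mul_le_mul (key1 (ξ - η) hζ1 ha1) hξ' (norm_nonneg _) (by positivity)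
        _ = ε/8 := by ring
    have e2 : ‖@inner ℂ _ _ (b η) (ξ' - η')‖ ≤ ε/8 := by
      rw [hb_sa]
      calc ‖@inner ℂ _ _ η (b (ξ' - η'))‖ ≤ ‖η‖ * ‖b (ξ' - η')‖ := norm_inner_le_norm _ _
        _ ≤ 1 * (ε/8) :=
            mul_le_mul (hs1 η hη) (key1 (ξ' - η') hζ2 ha2) (norm_nonneg _) zero_le_one
        _ = ε/8 := by ring
    have e3 : ‖@inner ℂ _ _ (b η) η'‖ ≤ ε/4 := by
      have hp := (dist_pi_lt_iff (show (0:ℝ) < ε/4 by positivity)).mp hdy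
        (⟨η, hη⟩, ⟨η', hη'⟩)
      rw [← hΦck] at hp
      have hval : @inner ℂ _ _ (b η) η' =
          Φ c (⟨η, hη⟩, ⟨η', hη'⟩) - Φ ck (⟨η, hη⟩, ⟨η', hη'⟩) := by
        simp only [hΦdef, hbdef]
        rw [show (c - ck) η = c η - ck η from rfl, inner_sub_left]
      rw [hval, ← dist_eq_norm]
      exact hp.le
    calc ‖@inner ℂ _ _ (b ξ) ξ'‖
        = ‖@inner ℂ _ _ (b (ξ - η)) ξ' + @inner ℂ _ _ (b η) (ξ' - η') +
            @inner ℂ _ _ (b η) η'‖ := by rw [hdecomp]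
      _ ≤ ‖@inner ℂ _ _ (b (ξ - η)) ξ'‖ + ‖@inner ℂ _ _ (b η) (ξ' - η')‖ +
            ‖@inner ℂ _ _ (b η) η'‖ := norm_add₃_le
      _ ≤ ε/8 + ε/8 + ε/4 := add_le_add (add_le_add e1 e2) e3
      _ = ε/2 := by ring
  have key3 : ‖b‖ ≤ ε/2 := by
    apply aux_opNorm_le_of_unit b (by positivity)
    intro ξ hξ
    exact aux_norm_apply_le_of_inner b ξ (by positivity) (fun ξ' hξ' => key2 ξ ξ' hξ hξ')
  calc ‖c - ck‖ = ‖b‖ := by rw [hbdef]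
    _ ≤ ε/2 := key3
    _ < ε := by linarith
end
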